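/- arXiv:1701.00621 — 4 statements merged into one kernel-verified Lean document; each statement's English description precedes it below -/
import Mathlib

section
/- Let S be a *-semigroup, a ∈ S and m a positive integer. Then the following are equivalent: (1) a is *-DMP with index m; (2) a is Drazin invertible with index m, a^m is Moore–Penrose invertible, and (a^D)^m = (a^m)^†; (3) a has a pseudo core inverse with index m and a^Ⓓ = a^D; (4) a has a pseudo core inverse with index m, a^m is Moore–Penrose invertible, and (a^Ⓓ)^m = (a^m)^†. -/
variable {S : Type*}

/-- `spow a m` is `a^m` for `m ≥ 1` in a semigroup (junk value `a` at `m = 0`). -/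
def spow [Semigroup S] (a : S) : ℕ → S
  | 0 => a
  | 1 => a
  | (n + 2) => spow a (n + 1) * a

/-- `x` is a `{1,3}`-inverse of `a`. -/
def Is13Inv [Semigroup S] [StarMul S] (a x : S) : Prop :=
  a * x * a = a ∧ star (a * x) = a * x

/-- `x` is the Moore–Penrose inverse of `a`. -/
def IsMPInv [Semigroup S] [StarMul S] (a x : S) : Prop :=
  a * x * a = a ∧ x * a * x = x ∧ star (a * x) = a * x ∧ star (x * a) = x * a

/-- `x` is the group inverse of `a`. -/
def IsGroupInv [Semigroup S] (a x : S) : Prop :=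
  a * x * a = a ∧ x * a * x = x ∧ a * x = x * a

/-- `a` is EP: the group inverse and Moore–Penrose inverse of `a` exist and coincide. -/
def IsEP [Semigroup S] [StarMul S] (a : S) : Prop :=
  ∃ x, IsGroupInv a x ∧ IsMPInv a x

/-- `a` is *-DMP with index `m`: `m` is the smallest positive integer with `a^m` EP. -/
def IsStarDMPWithIndex [Semigroup S] [StarMul S] (a : S) (m : ℕ) : Prop :=
  0 < m ∧ IsEP (spow a m) ∧ ∀ k, 0 < k → IsEP (spow a k) → m ≤ k

/-- The defining equations of a Drazin inverse `x` of `a` relative to the exponent `m`. -/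
def DrazinEqs [Semigroup S] (a x : S) (m : ℕ) : Prop :=
  spow a m * x * a = spow a m ∧ x * a * x = x ∧ a * x = x * a

/-- `x` is the Drazin inverse of `a` with (minimal) index `m`. -/
def IsDrazinWithIndex [Semigroup S] (a x : S) (m : ℕ) : Prop :=
  0 < m ∧ DrazinEqs a x m ∧ ∀ k, 0 < k → (∃ y, DrazinEqs a y k) → m ≤ k

/-- The defining equations of a pseudo core inverse `x` of `a` relative to the exponent `m`. -/
def PCoreEqs [Semigroup S] [StarMul S] (a x : S) (m : ℕ) : Prop :=
  x * spow a (m + 1) = spow a m ∧ a * (x * x) = x ∧ star (a * x) = a * x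

/-- `x` is the pseudo core inverse of `a` with (minimal) index `m`. -/
def IsPCoreWithIndex [Semigroup S] [StarMul S] (a x : S) (m : ℕ) : Prop :=
  0 < m ∧ PCoreEqs a x m ∧ ∀ k y, 0 < k → PCoreEqs a y k → m ≤ k

/-- The defining equations of a dual pseudo core inverse `x` of `a` relative to exponent `m`. -/
def DPCoreEqs [Semigroup S] [StarMul S] (a x : S) (m : ℕ) : Prop :=
  spow a (m + 1) * x = spow a m ∧ x * x * a = x ∧ star (x * a) = x * a

/-- `x` is the dual pseudo core inverse of `a` with (minimal) index `m`. -/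
def IsDPCoreWithIndex [Semigroup S] [StarMul S] (a x : S) (m : ℕ) : Prop :=
  0 < m ∧ DPCoreEqs a x m ∧ ∀ k y, 0 < k → DPCoreEqs a y k → m ≤ k

section Helpers
variable [Semigroup S]

private lemma spow_succ (a : S) {n : ℕ} (hn : 0 < n) : spow a (n + 1) = spow a n * a := by
  cases n with
  | zero => omega
  | succ k => rfl

private lemma spow_add (a : S) {j k : ℕ} (hj : 0 < j) (hk : 0 < k) :
    spow a (j + k) = spow a j * spow a k := by
  induction k, hk using Nat.le_induction with
  | base => exact spow_succ a hj
  | succ n hn ih =>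
    have h1 : spow a (j + (n + 1)) = spow a (j + n) * a := by
      have : j + (n+1) = (j+n) + 1 := by omega
      rw [this, spow_succ a (by omega)]
    rw [h1, ih, mul_assoc, ← spow_succ a hn]

private lemma spow_a_comm (a : S) {n : ℕ} (hn : 0 < n) : a * spow a n = spow a n * a := by
  have h1 := spow_add a (Nat.one_pos) hn
  have h2 := spow_succ a hn
  rw [Nat.add_comm] at h1
  calc a * spow a n = spow a 1 * spow a n := rfl
    _ = spow a (n+1) := h1.symm
    _ = spow a n * a := h2

private lemma spow_spow_comm (a : S) {j k : ℕ} (hj : 0 < j) (hk : 0 < k) :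
    spow a j * spow a k = spow a k * spow a j := by
  rw [← spow_add a hj hk, ← spow_add a hk hj, Nat.add_comm]

private lemma spow_commute {u v : S} (h : u * v = v * u) (n : ℕ) :
    spow u n * v = v * spow u n := by
  induction n with
  | zero => exact h
  | succ k ih =>
    cases k with
    | zero => exact h
    | succ j =>
      show spow u (j+1) * u * v = v * (spow u (j+1) * u)
      rw [mul_assoc, h, ← mul_assoc, ih, mul_assoc]

private lemma spow_absorb {d e : S} (h : d * e = d) {n : ℕ} (hn : 0 < n) :
    spow d n * e = spow d n := by
  induction n, hn using Nat.le_induction with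
  | base => exact h
  | succ k hk ih => rw [spow_succ d hk, mul_assoc, h]

private lemma spow_mul_spow {u v : S} (hc : u * v = v * u) (hi : u * v * (u * v) = u * v)
    {n : ℕ} (hn : 0 < n) : spow u n * spow v n = u * v := by
  induction n, hn using Nat.le_induction with
  | base => rfl
  | succ k hk ih =>
    rw [spow_succ u hk, spow_succ v hk]
    calc spow u k * u * (spow v k * v)
        = spow u k * (u * spow v k) * v := by rw [mul_assoc, mul_assoc, mul_assoc]
      _ = spow u k * (spow v k * u) * v := by rw [spow_commute hc.symm k]
      _ = spow u k * spow v k * (u * v) := by rw [mul_assoc, mul_assoc, mul_assoc]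
      _ = u * v := by rw [ih, hi]

private lemma mulL {a x : S} (h : a * (x * x) = x) {n : ℕ} (hn : 0 < n) :
    a * spow x (n + 1) = spow x n := by
  induction n, hn using Nat.le_induction with
  | base => exact h
  | succ k hk ih =>
    have h2 : spow x (k + 2) = spow x (k+1) * x := rfl
    rw [h2, ← mul_assoc, ih, ← spow_succ x hk]

private lemma spow_spow_ax {a x : S} (h : a * (x * x) = x) {n : ℕ} (hn : 0 < n) :
    spow a n * spow x n = a * x := by
  induction n, hn using Nat.le_induction with
  | base => rfl
  | succ k hk ih =>
    have h1 : spow a (k+1) = a * spow a k := (spow_a_comm a hk).symm ▸ (spow_succ a hk)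
    rw [spow_succ x hk, h1, mul_assoc a, ← mul_assoc (spow a k), ih, mul_assoc a x x, h]

private lemma spow_spow_x {a x : S} (h : a * (x * x) = x) {n : ℕ} (hn : 0 < n) :
    spow a n * spow x (n + 1) = x := by
  induction n, hn using Nat.le_induction with
  | base => exact h
  | succ k hk ih =>
    rw [spow_succ a hk, mul_assoc, mulL h (by omega), ih]

private lemma spow_eats {a x : S} {m : ℕ} (hm : 0 < m) (h : x * spow a (m + 1) = spow a m)
    {j : ℕ} (hj : 0 < j) : spow x j * spow a (m + j) = spow a m := by
  induction j, hj using Nat.le_induction with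
  | base => exact h
  | succ k hk ih =>
    have e1 : spow a (m + (k+1)) = spow a (m+1) * spow a k := by
      rw [← spow_add a (by omega) hk]; congr 1; omega
    rw [e1, spow_succ x hk, mul_assoc (spow x k), ← mul_assoc x, h,
      ← spow_add a hm hk]
    exact ih

private lemma mulyay {a y : S} (h : y * a * y = y) {n : ℕ} (hn : 0 < n) :
    y * a * spow y n = spow y n := by
  induction n, hn using Nat.le_induction with
  | base => exact h
  | succ k hk ih => rw [spow_succ y hk, ← mul_assoc, ih]

private lemma drazin_raise {a d : S} {k l : ℕ} (hk : 0 < k) (h : DrazinEqs a d k)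
    (hkl : k ≤ l) : DrazinEqs a d l := by
  induction l, hkl using Nat.le_induction with
  | base => exact h
  | succ n hn ih =>
    obtain ⟨e1, e2, e3⟩ := ih
    refine ⟨?_, e2, e3⟩
    rw [spow_succ a (by omega), mul_assoc (spow a n) a d, e3, ← mul_assoc (spow a n) d a, e1]

private lemma drazin_unique {a y z : S} {n : ℕ} (hn : 0 < n)
    (hy : DrazinEqs a y n) (hz : DrazinEqs a z n) : y = z := by
  obtain ⟨hy1, hy2, hy3⟩ := hy
  obtain ⟨hz1, hz2, hz3⟩ := hz
  have hyidem : y * a * (y * a) = y * a := by rw [← mul_assoc, hy2]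
  have hzidem : a * z * (a * z) = a * z := by
    rw [mul_assoc a z, ← mul_assoc z a z, hz2]
  have L4ya : spow y n * spow a n = y * a := spow_mul_spow hy3.symm hyidem hn
  have L4ya' : spow y (n+1) * spow a (n+1) = y * a := spow_mul_spow hy3.symm hyidem (by omega)
  have L4az : spow a n * spow z n = a * z := spow_mul_spow hz3 hzidem hn
  have L4az' : spow a (n+1) * spow z (n+1) = a * z := spow_mul_spow hz3 hzidem (by omega)
  have s1 : spow y (n+1) * spow a n = y := by
    rw [spow_succ y hn, mul_assoc, ← spow_commute hy3 n, ← mul_assoc, L4ya, hy2]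
  have s2 : spow a (n+1) * z = spow a n := by
    rw [spow_succ a hn, mul_assoc, hz3, ← mul_assoc, hz1]
  have s3 : spow a n * spow z (n+1) = z := by
    rw [spow_succ z hn, ← mul_assoc, L4az, hz3, hz2]
  have s4 : y * spow a (n+1) = spow a n := by
    rw [spow_succ a hn, ← mul_assoc, ← spow_commute hy3 n, hy1]
  have key1 : y = y * (a * z) := by
    calc y = spow y (n+1) * spow a n := s1.symm
      _ = spow y (n+1) * (spow a (n+1) * z) := by rw [s2]
      _ = spow y (n+1) * spow a (n+1) * z := by rw [← mul_assoc]
      _ = y * a * z := by rw [L4ya']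
      _ = y * (a * z) := by rw [mul_assoc]
  have key2 : z = y * (a * z) := by
    calc z = spow a n * spow z (n+1) := s3.symm
      _ = y * spow a (n+1) * spow z (n+1) := by rw [s4]
      _ = y * (spow a (n+1) * spow z (n+1)) := by rw [mul_assoc]
      _ = y * (a * z) := by rw [L4az']
  exact key1.trans key2.symm

private lemma pcore_to_drazin' {a x : S} {k : ℕ} (hk : 0 < k)
    (hp1 : x * spow a (k+1) = spow a k) (hp2 : a * (x * x) = x) :
    DrazinEqs a (spow x (k+1) * spow a k) k := by
  have had : a * (spow x (k+1) * spow a k) = spow x k * spow a k := by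
    rw [← mul_assoc, mulL hp2 hk]
  have hda : (spow x (k+1) * spow a k) * a = spow x k * spow a k := by
    rw [mul_assoc, ← spow_succ a hk, spow_succ x hk, mul_assoc, hp1]
  refine ⟨?_, ?_, had.trans hda.symm⟩
  · rw [← mul_assoc (spow a k), spow_spow_x hp2 hk, mul_assoc, ← spow_succ a hk, hp1]
  · rw [hda, mul_assoc (spow x k) (spow a k), ← mul_assoc (spow a k),
      spow_spow_x hp2 hk, ← mul_assoc, ← spow_succ x hk]

private lemma ep_to_drazin {a g : S} {n : ℕ} (hn : 0 < n)
    (h1 : spow a n * g * spow a n = spow a n)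
    (h2 : g * spow a n * g = g)
    (h3 : spow a n * g = g * spow a n) :
    ∃ d, DrazinEqs a d n ∧ spow d n = g ∧ a * d = spow a n * g := by
  obtain _|n := n
  · omega
  obtain _|k := n
  · exact ⟨g, ⟨h1, h2, h3⟩, rfl, rfl⟩
  have hk2 : (0:ℕ) < k + 2 := by omega
  have hk1 : (0:ℕ) < k + 1 := by omega
  have hpr0 : spow a (k+2) = spow a (k+1) * a := spow_succ a hk1
  set p := spow a (k+2) with hp
  set r := spow a (k+1) with hr
  have hpr : p = r * a := hpr0
  have har : a * r = p := by rw [hpr]; exact spow_a_comm a hk1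
  have hab : a * p = p * a := spow_a_comm a hk2
  have hrp : r * p = p * r := spow_spow_comm a hk1 hk2
  have h2' : g * (p * g) = g := by rw [← mul_assoc]; exact h2
  have i1 : p * g * g = g := by rw [h3]; exact h2
  have i2 : g * g * p = g := by rw [mul_assoc, ← h3]; exact h2'
  have i3 : (p * g) * (p * g) = p * g := by rw [← mul_assoc, h1]
  have i6 : p * (p * g) = p := by rw [h3, ← mul_assoc]; exact h1
  have i8 : (p * g) * (p * a) = p * a := by rw [← mul_assoc, h1]
  have i9 : (p * a) * (p * g) = p * a := by
    rw [← hab, mul_assoc a p (p*g), i6]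
  have i10 : (g * g * r) * (p * a) = p * g := by
    rw [← hab, mul_assoc (g*g) r (a*p), ← mul_assoc r a p, ← hpr,
      ← mul_assoc (g*g) p p, i2, ← h3]
  have i11 : (p * a) * (r * (g * g)) = p * g := by
    rw [mul_assoc p a (r*(g*g)), ← mul_assoc a r (g*g), har, ← mul_assoc p g g, i1]
  have i14 : (g * g * r) * (p * g) = (p * g) * (r * (g * g)) := by
    calc (g*g*r)*(p*g) = (g*g*r)*((p*a)*(r*(g*g))) := by rw [i11]
      _ = ((g*g*r)*(p*a))*(r*(g*g)) := by rw [← mul_assoc]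
      _ = (p*g)*(r*(g*g)) := by rw [i10]
  set q := (p * g) * (r * (g * g)) with hq
  have qb : q * (p * a) = p * g := by
    rw [← i14, mul_assoc (g*g*r) (p*g) (p*a), i8, i10]
  have bq : (p * a) * q = p * g := by
    rw [hq, ← mul_assoc (p*a) (p*g) (r*(g*g)), i9, i11]
  have A : p * q = r * g := by
    rw [hq, ← mul_assoc p (p*g) (r*(g*g)), i6, ← mul_assoc p r (g*g), ← hrp,
      mul_assoc r p (g*g), ← mul_assoc p g g, i1]
  have B : q * p = g * r := by
    rw [← i14, mul_assoc (g*g*r) (p*g) p, h1, mul_assoc (g*g) r p, hrp,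
      ← mul_assoc (g*g) p r, i2]
  have e_q : (p * g) * q = q := by
    rw [hq, ← mul_assoc (p*g) (p*g) (r*(g*g)), i3]
  have pbc : p * (p * a) = (p * a) * p := by
    rw [← hab, ← mul_assoc p a p, hab]
  have i21 : (q * p) * ((p * a) * g) = p * g := by
    calc (q*p)*((p*a)*g) = q*(p*((p*a)*g)) := by rw [mul_assoc]
      _ = q*((p*(p*a))*g) := by rw [← mul_assoc p (p*a) g]
      _ = q*(((p*a)*p)*g) := by rw [pbc]
      _ = q*((p*a)*(p*g)) := by rw [mul_assoc (p*a) p g]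
      _ = (q*(p*a))*(p*g) := by rw [← mul_assoc q (p*a) (p*g)]
      _ = (p*g)*(p*g) := by rw [qb]
      _ = p*g := i3
  have i22 : ((p * a) * g) * (p * q) = p * g := by
    calc ((p*a)*g)*(p*q) = (p*a)*(g*(p*q)) := by rw [mul_assoc]
      _ = (p*a)*((g*p)*q) := by rw [← mul_assoc g p q]
      _ = (p*a)*((p*g)*q) := by rw [← h3]
      _ = (p*a)*q := by rw [e_q]
      _ = p*g := bq
  have qpe : (q * p) * (p * g) = q * p := by rw [mul_assoc q p (p*g), i6]
  have epq : (p * g) * (p * q) = p * q := by rw [← mul_assoc (p*g) p q, h1]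
  have key0 : q * p = p * q := by
    calc q*p = (q*p)*(p*g) := qpe.symm
      _ = (q*p)*(((p*a)*g)*(p*q)) := by rw [i22]
      _ = ((q*p)*((p*a)*g))*(p*q) := by rw [← mul_assoc]
      _ = (p*g)*(p*q) := by rw [i21]
      _ = p*q := epq
  have key : r * g = g * r := by rw [← A, ← B, key0]
  have had : a * (r * g) = p * g := by rw [← mul_assoc a r g, har]
  have hda : (r * g) * a = p * g := by rw [key, mul_assoc g r a, ← hpr, ← h3]
  have hii : (r * g) * a * ((r * g) * a) = (r * g) * a := by rw [hda, i3]
  have hcm : (r * g) * a = a * (r * g) := hda.trans had.symm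
  have L4 : spow (r*g) (k+2) * spow a (k+2) = (r*g) * a := spow_mul_spow hcm hii hk2
  have hde : (r * g) * (p * g) = r * g := by
    rw [mul_assoc r g (p*g), ← mul_assoc g p g, h2]
  have habs : spow (r*g) (k+2) * (p * g) = spow (r*g) (k+2) := spow_absorb hde hk2
  refine ⟨r * g, ⟨?_, ?_, hcm.symm⟩, ?_, ?_⟩
  · rw [← hp, mul_assoc p (r*g) a, hda, i6]
  · rw [hda, key, ← mul_assoc (p*g) g r, i1]
  · calc spow (r*g) (k+2) = spow (r*g) (k+2) * (p*g) := habs.symm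
      _ = (spow (r*g) (k+2) * p) * g := by rw [← mul_assoc]
      _ = (spow (r*g) (k+2) * spow a (k+2)) * g := by rw [hp]
      _ = ((r*g)*a)*g := by rw [L4]
      _ = (p*g)*g := by rw [hda]
      _ = g := i1
  · exact had

end Helpers

section StarHelpers
variable [Semigroup S] [StarMul S]

private lemma drazin_13_to_pcore {a d y : S} {k : ℕ} (hk : 0 < k)
    (hD : DrazinEqs a d k)
    (h1 : spow a k * y * spow a k = spow a k)
    (h3 : star (spow a k * y) = spow a k * y) :
    PCoreEqs a (d * spow a k * y) k := by
  obtain ⟨e1, e2, e3⟩ := hD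
  set p := spow a k with hp
  have hpd : p * d = d * p := spow_commute e3 k
  have hpa : a * p = p * a := spow_a_comm a hk
  have hax : a * (d * p * y) = p * y := by
    rw [← mul_assoc a (d*p) y, ← mul_assoc a d p, e3, mul_assoc d a p, hpa,
      ← mul_assoc d p a, ← hpd, e1]
  refine ⟨?_, ?_, ?_⟩
  · rw [spow_succ a hk, ← hp, ← mul_assoc (d*p*y) p a, mul_assoc (d*p) y p,
      mul_assoc d p (y*p), ← mul_assoc p y p, h1, ← hpd, e1]
  · rw [← mul_assoc a (d*p*y) (d*p*y), hax, ← hpd, ← mul_assoc (p*y) (p*d) y,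
      ← mul_assoc (p*y) p d, h1, hpd]
  · rw [hax, h3]

private lemma imp12 {a : S} {m : ℕ} (h : IsStarDMPWithIndex a m) :
    ∃ d y, IsDrazinWithIndex a d m ∧ IsMPInv (spow a m) y ∧ spow d m = y := by
  obtain ⟨hm0, ⟨x, ⟨g1, g2, g3⟩, hMP⟩, hEPmin⟩ := h
  obtain ⟨d, hD, hdm, had⟩ := ep_to_drazin hm0 g1 g2 g3
  refine ⟨d, x, ⟨hm0, hD, ?_⟩, hMP, hdm⟩
  rintro k hk ⟨y, hy⟩
  have hyn : DrazinEqs a y (max k m) := drazin_raise hk hy (le_max_left _ _)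
  have hdn : DrazinEqs a d (max k m) := drazin_raise hm0 hD (le_max_right _ _)
  have hyd : y = d := drazin_unique (lt_of_lt_of_le hk (le_max_left _ _)) hyn hdn
  obtain ⟨hy1, hy2, hy3⟩ := hy
  have hay_idem : a * y * (a * y) = a * y := by
    rw [mul_assoc a y (a*y), ← mul_assoc y a y, hy2]
  have hya_idem : y * a * (y * a) = y * a := by rw [← mul_assoc, hy2]
  have L4ay : spow a k * spow y k = a * y := spow_mul_spow hy3 hay_idem hk
  have L4ya : spow y k * spow a k = y * a := spow_mul_spow hy3.symm hya_idem hk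
  have pyp : spow a k * spow y k * spow a k = spow a k := by
    rw [L4ay, mul_assoc a y (spow a k), ← spow_commute hy3 k, ← mul_assoc a (spow a k) y,
      spow_a_comm a hk, mul_assoc (spow a k) a y, hy3, ← mul_assoc (spow a k) y a, hy1]
  have ypy : spow y k * spow a k * spow y k = spow y k := by
    rw [L4ya]; exact mulyay hy2 hk
  have cmm : spow a k * spow y k = spow y k * spow a k := by rw [L4ay, L4ya, hy3]
  have hay_eq : a * y = spow a m * x := by rw [hyd]; exact had
  have hstar : star (spow a m * x) = spow a m * x := hMP.2.2.1
  have st1 : star (spow a k * spow y k) = spow a k * spow y k := by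
    rw [L4ay, hay_eq]; exact hstar
  have st2 : star (spow y k * spow a k) = spow y k * spow a k := by
    rw [L4ya, ← hy3, hay_eq]; exact hstar
  exact hEPmin k hk ⟨spow y k, ⟨pyp, ypy, cmm⟩, pyp, ypy, st1, st2⟩

private lemma imp23 {a : S} {m : ℕ}
    (h : ∃ d y, IsDrazinWithIndex a d m ∧ IsMPInv (spow a m) y ∧ spow d m = y) :
    ∃ x, IsPCoreWithIndex a x m ∧ ∃ k d, IsDrazinWithIndex a d k ∧ x = d := by
  obtain ⟨d, y, ⟨hm0, hD, hDmin⟩, ⟨m1, m2, m3, m4⟩, hdm⟩ := h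
  have hPC : PCoreEqs a (d * spow a m * y) m := drazin_13_to_pcore hm0 hD m1 m3
  obtain ⟨e1, e2, e3⟩ := hD
  have idem : a * d * (a * d) = a * d := by
    rw [mul_assoc a d (a*d), ← mul_assoc d a d, e2]
  have L4 : spow a m * spow d m = a * d := spow_mul_spow e3 idem hm0
  have hxd : d * spow a m * y = d := by
    rw [← hdm, mul_assoc d (spow a m) (spow d m), L4, ← mul_assoc d a d, e2]
  refine ⟨d * spow a m * y, ⟨hm0, hPC, ?_⟩, m, d, ⟨hm0, ⟨e1, e2, e3⟩, hDmin⟩, hxd⟩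
  intro k z hk hz
  exact hDmin k hk ⟨spow z (k+1) * spow a k, pcore_to_drazin' hk hz.1 hz.2.1⟩

private lemma imp34 {a : S} {m : ℕ}
    (h : ∃ x, IsPCoreWithIndex a x m ∧ ∃ k d, IsDrazinWithIndex a d k ∧ x = d) :
    ∃ x y, IsPCoreWithIndex a x m ∧ IsMPInv (spow a m) y ∧ spow x m = y := by
  obtain ⟨x, hPC, k, d, hDW, hxd⟩ := h
  subst hxd
  obtain ⟨hm0, ⟨hp1, hp2, hp3⟩, hpmin⟩ := hPC
  obtain ⟨hk0, ⟨e1, e2, e3⟩, hkmin⟩ := hDW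
  have idem_ax : a * x * (a * x) = a * x := by
    rw [mul_assoc a x (a*x), ← mul_assoc x a x, e2]
  have idem_xa : x * a * (x * a) = x * a := by rw [← mul_assoc, e2]
  have L4ax : spow a m * spow x m = a * x := spow_mul_spow e3 idem_ax hm0
  have L4xa : spow x m * spow a m = x * a := spow_mul_spow e3.symm idem_xa hm0
  have hax1 : spow a (m+1) * x = spow a m := (spow_commute e3 (m+1)).trans hp1
  have MP1 : spow a m * spow x m * spow a m = spow a m := by
    rw [L4ax, mul_assoc a x (spow a m), ← spow_commute e3 m, ← mul_assoc a (spow a m) x,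
      spow_a_comm a hm0, ← spow_succ a hm0, hax1]
  have MP2 : spow x m * spow a m * spow x m = spow x m := by
    rw [L4xa]; exact mulyay e2 hm0
  have MP3 : star (spow a m * spow x m) = spow a m * spow x m := by
    rw [L4ax]; exact hp3
  have MP4 : star (spow x m * spow a m) = spow x m * spow a m := by
    rw [L4xa, ← e3]; exact hp3
  exact ⟨x, spow x m, ⟨hm0, ⟨hp1, hp2, hp3⟩, hpmin⟩, ⟨MP1, MP2, MP3, MP4⟩, rfl⟩

private lemma imp41 {a : S} {m : ℕ}
    (h : ∃ x y, IsPCoreWithIndex a x m ∧ IsMPInv (spow a m) y ∧ spow x m = y) :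
    IsStarDMPWithIndex a m := by
  obtain ⟨x, y, ⟨hm0, ⟨hp1, hp2, hp3⟩, hpmin⟩, ⟨m1, m2, m3, m4⟩, hxy⟩ := h
  subst hxy
  have L4ax : spow a m * spow x m = a * x := spow_spow_ax hp2 hm0
  have ef : (a * x) * (spow x m * spow a m) = spow x m * spow a m := by
    rw [mul_assoc a x (spow x m * spow a m), ← mul_assoc x (spow x m) (spow a m),
      spow_a_comm x hm0, ← mul_assoc a (spow x m * x) (spow a m), ← spow_succ x hm0,
      mulL hp2 hm0]
  have fe : (spow x m * spow a m) * (spow a m * spow x m) = spow a m * spow x m := by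
    have h2m : spow a m * spow a m = spow a (m+m) := (spow_add a hm0 hm0).symm
    have eats : spow x m * spow a (m+m) = spow a m := spow_eats hm0 hp1 hm0
    rw [mul_assoc (spow x m) (spow a m) (spow a m * spow x m),
      ← mul_assoc (spow a m) (spow a m) (spow x m), h2m,
      ← mul_assoc (spow x m) (spow a (m+m)) (spow x m), eats]
  have hstar_ax : star (a * x) = spow a m * spow x m := by
    rw [← L4ax]; exact m3
  have f_e : (spow x m * spow a m) * (spow a m * spow x m) = spow x m * spow a m := by
    have tmp := congrArg star ef
    rw [star_mul, m4, hstar_ax] at tmp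
    exact tmp
  have key : spow a m * spow x m = spow x m * spow a m := fe.symm.trans f_e
  refine ⟨hm0, ⟨spow x m, ⟨m1, m2, key⟩, ⟨m1, m2, m3, m4⟩⟩, ?_⟩
  intro k hk hep
  obtain ⟨g, ⟨g1, g2, g3⟩, mmp⟩ := hep
  obtain ⟨d', hD', -, -⟩ := ep_to_drazin hk g1 g2 g3
  exact hpmin k (d' * spow a k * g) hk (drazin_13_to_pcore hk hD' mmp.1 mmp.2.2.1)

end StarHelpers

/-- Lemma 2.3: characterizations of *-DMP elements via the Drazin inverse, the
Moore–Penrose inverse of `a^m`, and the pseudo core inverse. -/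
theorem stmt_0 [Semigroup S] [StarMul S] (a : S) (m : ℕ) (hm : 0 < m) :
    List.TFAE
      [ IsStarDMPWithIndex a m,
        ∃ d y, IsDrazinWithIndex a d m ∧ IsMPInv (spow a m) y ∧ spow d m = y,
        ∃ x, IsPCoreWithIndex a x m ∧ ∃ k d, IsDrazinWithIndex a d k ∧ x = d,
        ∃ x y, IsPCoreWithIndex a x m ∧ IsMPInv (spow a m) y ∧ spow x m = y ] := by
  tfae_have 1 → 2 := imp12
  tfae_have 2 → 3 := imp23
  tfae_have 3 → 4 := imp34
  tfae_have 4 → 1 := imp41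
  tfae_finish
end

section
/- Let S be a *-semigroup and a ∈ S. Then a is EP if and only if a has a {1,3}-inverse and a x = x a for some {1,3}-inverse x of a. -/
variable {S : Type*}

/-- Corollary 2.5: `a` is EP iff `a` has a `{1,3}`-inverse commuting with `a`. -/
theorem stmt_2 [Semigroup S] [StarMul S] (a : S) :
    IsEP a ↔ ∃ x, Is13Inv a x ∧ a * x = x * a := by
  constructor
  · rintro ⟨x, ⟨_, _, hc⟩, ⟨h1, _, h3, _⟩⟩
    exact ⟨x, ⟨h1, h3⟩, hc⟩
  · rintro ⟨x, ⟨h1, h3⟩, hc⟩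
    have ha : x * a * x * a = x * a := by rw [mul_assoc x a x, mul_assoc x, h1]
    have hay : a * (x * a * x) = a * x := by rw [← mul_assoc, ← mul_assoc, h1]
    have hya : x * a * x * a = a * x := by rw [ha, ← hc]
    have g1 : a * (x * a * x) * a = a := by rw [hay, h1]
    have g2 : x * a * x * a * (x * a * x) = x * a * x := by
      rw [ha, ← mul_assoc, ← mul_assoc, ha]
    have g3 : a * (x * a * x) = x * a * x * a := by rw [hay, hya]
    have g4 : star (a * (x * a * x)) = a * (x * a * x) := by rw [hay, h3]
    have g5 : star (x * a * x * a) = x * a * x * a := by rw [hya, h3]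
    exact ⟨x * a * x, ⟨g1, g2, g3⟩, ⟨g1, g2, g4, g5⟩⟩
end

section
/- Let S be a *-semigroup and a ∈ S. Then a is *-DMP with index m if and only if a has a pseudo core inverse a^Ⓓ with index m and one of the following equivalent conditions holds: (1) a a^Ⓓ = a^Ⓓ a; (2) a^D a^Ⓓ = a^Ⓓ a^D; (3) a^Ⓓ = x a^m a^D for some {1,3}-inverse x of a^m; (4) a^{m+1} a^Ⓓ = a^m; (5) (a^Ⓓ)^2 a = a^Ⓓ; (6) (a^Ⓓ a)* = a^Ⓓ a; (7) (a a^Ⓓ)(a^Ⓓ a) = (a^Ⓓ a)(a a^Ⓓ). (Here the existence of a^Ⓓ with index m guarantees that a is Drazin invertible with index m and that a^m has a {1,3}-inverse.) -/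
set_option linter.unusedSectionVars false
set_option maxHeartbeats 1000000

variable {S : Type*}

namespace StarDMP

section MonoidPart
variable {M : Type*} [Monoid M] [StarMul M]

lemma idem_pow {x : M} (hx : x * x = x) : ∀ {k : ℕ}, 1 ≤ k → x ^ k = x := by
  intro k hk
  induction k with
  | zero => omega
  | succ n ih =>
    rcases Nat.lt_or_ge 0 n with h | h
    · rw [pow_succ, ih h, hx]
    · interval_cases n; simp [pow_one]

section PC
variable {A P : M} {m : ℕ}

lemma h2z (h2 : A * (P * P) = P) : ∀ z, A * (P * (P * z)) = P * z := fun z => by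
  rw [← mul_assoc, ← mul_assoc, mul_assoc A P P, h2]

lemma h1z (h1 : P * A ^ (m+1) = A ^ m) : ∀ z, P * (A ^ (m+1) * z) = A ^ m * z := fun z => by
  rw [← mul_assoc, h1]

/-- A^t * P^(t+1) = P for t ≥ 1 -/
lemma apow_p (h2 : A * (P * P) = P) : ∀ t, 1 ≤ t → A ^ t * P ^ (t+1) = P := by
  intro t ht
  induction t with
  | zero => omega
  | succ n ih =>
    rcases Nat.lt_or_ge 0 n with h | h
    · calc A ^ (n+1) * P ^ (n+2)
          = (A ^ n * A) * (P * (P * P ^ n)) := by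
            rw [pow_succ A n, pow_succ' P (n+1), pow_succ' P n]
        _ = A ^ n * (A * (P * (P * P ^ n))) := by simp only [mul_assoc]
        _ = A ^ n * (P * P ^ n) := by rw [h2z h2]
        _ = A ^ n * P ^ (n+1) := by rw [pow_succ']
        _ = P := ih h
    · interval_cases n
      calc A ^ 1 * P ^ 2 = A * (P * P) := by rw [pow_one, sq]
        _ = P := h2

/-- A^t * P^t = A*P for t ≥ 1 -/
lemma apow_ppow (h2 : A * (P * P) = P) : ∀ t, 1 ≤ t → A ^ t * P ^ t = A * P := by
  intro t ht
  induction t with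
  | zero => omega
  | succ n ih =>
    rcases Nat.lt_or_ge 0 n with h | h
    · have hPn : P ^ (n+1) = P * (P * P ^ (n-1)) := by
        rw [show n+1 = 2+(n-1) by omega, pow_add, sq, mul_assoc]
      have hPn2 : P * P ^ (n-1) = P ^ n := by
        rw [← pow_succ', show n-1+1 = n by omega]
      calc A ^ (n+1) * P ^ (n+1)
          = (A ^ n * A) * (P * (P * P ^ (n-1))) := by rw [pow_succ, hPn]
        _ = A ^ n * (A * (P * (P * P ^ (n-1)))) := by simp only [mul_assoc]
        _ = A ^ n * (P * P ^ (n-1)) := by rw [h2z h2]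
        _ = A ^ n * P ^ n := by rw [hPn2]
        _ = A * P := ih h
    · interval_cases n
      simp

/-- A * P^(t+1) = P^t for t ≥ 1 -/
lemma a_ppow (h2 : A * (P * P) = P) : ∀ t, 1 ≤ t → A * P ^ (t+1) = P ^ t := by
  intro t ht
  have hPt : P ^ (t+1) = P * (P * P ^ (t-1)) := by
    rw [show t+1 = 2+(t-1) by omega, pow_add, sq, mul_assoc]
  have hPt2 : P * P ^ (t-1) = P ^ t := by
    rw [← pow_succ', show t-1+1 = t by omega]
  rw [hPt, h2z h2, hPt2]

/-- P * A^(j+1) = A^j for j ≥ m -/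
lemma p_apow (h1 : P * A ^ (m+1) = A ^ m) : ∀ j, m ≤ j → P * A ^ (j+1) = A ^ j := by
  intro j hj
  have h : j + 1 = (m+1) + (j - m) := by omega
  rw [h, pow_add, h1z h1, ← pow_add, show m + (j - m) = j by omega]

/-- P^s * A^(m+s) = A^m -/
lemma ppow_apow (h1 : P * A ^ (m+1) = A ^ m) : ∀ s, P ^ s * A ^ (m+s) = A ^ m := by
  intro s
  induction s with
  | zero => simp
  | succ n ih =>
    calc P ^ (n+1) * A ^ (m+(n+1))
        = P ^ n * (P * A ^ ((m+n)+1)) := by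
          rw [pow_succ P n, show m + (n+1) = (m+n)+1 by omega]
          simp only [mul_assoc]
      _ = P ^ n * A ^ (m+n) := by rw [p_apow h1 (m+n) (by omega)]
      _ = A ^ m := ih

/-- (A*P) * A^j = A^j for j ≥ m -/
lemma e_apow (h1 : P * A ^ (m+1) = A ^ m) (h2 : A * (P * P) = P) :
    ∀ j, m ≤ j → (A * P) * A ^ j = A ^ j := by
  intro j hj
  have key : (A * P) * A ^ m = A ^ m := by
    conv_lhs => rw [← h1]
    calc (A * P) * (P * A ^ (m+1)) = A * (P * (P * A ^ (m+1))) := by simp only [mul_assoc]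
      _ = P * A ^ (m+1) := h2z h2 _
      _ = A ^ m := h1
  calc (A * P) * A ^ j = (A * P) * (A ^ m * A ^ (j - m)) := by
        rw [← pow_add, show m + (j-m) = j by omega]
    _ = ((A * P) * A ^ m) * A ^ (j-m) := by simp only [mul_assoc]
    _ = A ^ m * A ^ (j-m) := by rw [key]
    _ = A ^ j := by rw [← pow_add, show m + (j-m) = j by omega]

/-- P*A*P = P -/
lemma pap (h1 : P * A ^ (m+1) = A ^ m) (h2 : A * (P * P) = P) (hm : 1 ≤ m) :
    P * A * P = P := by
  calc P * A * P = P * A * (A ^ m * P ^ (m+1)) :=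
        (congrArg (fun z => P * A * z) (apow_p h2 m hm)).symm
    _ = P * (A ^ (m+1) * P ^ (m+1)) := by
        rw [pow_succ' A m]; simp only [mul_assoc]
    _ = A ^ m * P ^ (m+1) := by rw [← mul_assoc, h1]
    _ = P := apow_p h2 m hm

lemma e_p (h2 : A * (P * P) = P) : (A * P) * P = P := by
  rw [mul_assoc]; exact h2

lemma p_e (h1 : P * A ^ (m+1) = A ^ m) (h2 : A * (P * P) = P) (hm : 1 ≤ m) :
    P * (A * P) = P := by rw [← mul_assoc]; exact pap h1 h2 hm

lemma e_idem (h1 : P * A ^ (m+1) = A ^ m) (h2 : A * (P * P) = P) (hm : 1 ≤ m) :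
    (A * P) * (A * P) = A * P := by
  calc (A * P) * (A * P) = A * (P * A * P) := by simp only [mul_assoc]
    _ = A * P := by rw [pap h1 h2 hm]

lemma e_ppow (h2 : A * (P * P) = P) :
    ∀ t, 1 ≤ t → (A * P) * P ^ t = P ^ t := by
  intro t ht
  calc (A * P) * P ^ t = (A * P) * (P * P ^ (t-1)) := by
        conv_lhs => rw [show t = (t-1)+1 by omega, pow_succ' P]
    _ = ((A*P)*P) * P ^ (t-1) := by simp only [mul_assoc]
    _ = P * P ^ (t-1) := by rw [e_p h2]
    _ = P ^ t := by conv_rhs => rw [show t = (t-1)+1 by omega, pow_succ' P]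

lemma ppow_e (h1 : P * A ^ (m+1) = A ^ m) (h2 : A * (P * P) = P) (hm : 1 ≤ m) :
    ∀ t, 1 ≤ t → P ^ t * (A * P) = P ^ t := by
  intro t ht
  have hPt : P ^ t = P ^ (t-1) * P := by rw [← pow_succ, show t-1+1 = t by omega]
  calc P ^ t * (A * P) = P ^ (t-1) * (P * (A * P)) := by
        rw [hPt]; simp only [mul_assoc]
    _ = P ^ (t-1) * P := by rw [p_e h1 h2 hm]
    _ = P ^ t := by rw [← pow_succ, show t - 1 + 1 = t by omega]

lemma te_aux (h1 : P * A ^ (m+1) = A ^ m) (h2 : A * (P * P) = P) (hm : 1 ≤ m) :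
    ∀ i j, i + j + 1 = m → P ^ i * (A ^ m * P ^ (j+1)) = A * P := by
  intro i
  induction i with
  | zero =>
    intro j hj
    have : j + 1 = m := by omega
    rw [pow_zero, one_mul, this]
    exact apow_ppow h2 m hm
  | succ n ih =>
    intro j hj
    calc P ^ (n+1) * (A ^ m * P ^ (j+1))
        = P ^ (n+1) * (A ^ m * (A * P ^ (j+2))) := by rw [a_ppow h2 (j+1) (by omega)]
      _ = P ^ n * (P * (A ^ (m+1) * P ^ (j+2))) := by
          rw [pow_succ P n, pow_succ A m]
          simp only [mul_assoc]
      _ = P ^ n * (A ^ m * P ^ (j+2)) := by rw [h1z h1]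
      _ = A * P := ih (j+1) (by omega)

lemma t_e (h1 : P * A ^ (m+1) = A ^ m) (h2 : A * (P * P) = P) (hm : 1 ≤ m) :
    (P ^ m * A ^ m) * (A * P) = A * P := by
  have hPm : P ^ m = P ^ (m-1) * P := by rw [← pow_succ, show m-1+1 = m by omega]
  calc (P ^ m * A ^ m) * (A * P)
      = P ^ (m-1) * (P * (A ^ (m+1) * P ^ 1)) := by
        rw [hPm, pow_succ A m, pow_one]
        simp only [mul_assoc]
      _ = P ^ (m-1) * (A ^ m * P ^ 1) := by rw [h1z h1]
      _ = A * P := te_aux h1 h2 hm (m-1) 0 (by omega)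

lemma e_t (h1 : P * A ^ (m+1) = A ^ m) (h2 : A * (P * P) = P) (hm : 1 ≤ m) :
    (A * P) * (P ^ m * A ^ m) = P ^ m * A ^ m := by
  calc (A * P) * (P ^ m * A ^ m) = ((A*P) * P ^ m) * A ^ m := by simp only [mul_assoc]
    _ = P ^ m * A ^ m := by rw [e_ppow h2 m hm]

lemma am_t (h1 : P * A ^ (m+1) = A ^ m) (h2 : A * (P * P) = P) (hm : 1 ≤ m) :
    A ^ m * (P ^ m * A ^ m) = A ^ m := by
  calc A ^ m * (P ^ m * A ^ m) = (A ^ m * P ^ m) * A ^ m := by simp only [mul_assoc]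
    _ = (A * P) * A ^ m := by rw [apow_ppow h2 m hm]
    _ = A ^ m := e_apow h1 h2 m le_rfl

lemma t_am (h1 : P * A ^ (m+1) = A ^ m) :
    (P ^ m * A ^ m) * A ^ m = A ^ m := by
  calc (P ^ m * A ^ m) * A ^ m = P ^ m * A ^ (m+m) := by rw [mul_assoc, ← pow_add]
    _ = A ^ m := ppow_apow h1 m

lemma amd (h1 : P * A ^ (m+1) = A ^ m) (h2 : A * (P * P) = P) (hm : 1 ≤ m) :
    A ^ m * (P ^ (m+1) * A ^ m) = P * A ^ m := by
  calc A ^ m * (P ^ (m+1) * A ^ m) = (A ^ m * P ^ (m+1)) * A ^ m := by simp only [mul_assoc]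
    _ = P * A ^ m := by rw [apow_p h2 m hm]

lemma amda (h1 : P * A ^ (m+1) = A ^ m) (h2 : A * (P * P) = P) (hm : 1 ≤ m) :
    A ^ m * (P ^ (m+1) * A ^ m) * A = A ^ m := by
  rw [amd h1 h2 hm, mul_assoc, ← pow_succ]
  exact p_apow h1 m le_rfl

lemma ad (h2 : A * (P * P) = P) (hm : 1 ≤ m) :
    A * (P ^ (m+1) * A ^ m) = P ^ m * A ^ m := by
  rw [← mul_assoc, a_ppow h2 m hm]

lemma da (h1 : P * A ^ (m+1) = A ^ m) :
    (P ^ (m+1) * A ^ m) * A = P ^ m * A ^ m := by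
  calc (P ^ (m+1) * A ^ m) * A = P ^ m * (P * A ^ (m+1)) := by
        rw [pow_succ P m, pow_succ A m]; simp only [mul_assoc]
    _ = P ^ m * A ^ m := by rw [h1]

lemma t_d (h1 : P * A ^ (m+1) = A ^ m) (h2 : A * (P * P) = P) (hm : 1 ≤ m) :
    (P ^ m * A ^ m) * (P ^ (m+1) * A ^ m) = P ^ (m+1) * A ^ m := by
  calc (P ^ m * A ^ m) * (P ^ (m+1) * A ^ m)
      = P ^ m * ((A ^ m * P ^ (m+1)) * A ^ m) := by simp only [mul_assoc]
    _ = P ^ m * (P * A ^ m) := by rw [apow_p h2 m hm]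
    _ = P ^ (m+1) * A ^ m := by rw [← mul_assoc, ← pow_succ]

lemma dad (h1 : P * A ^ (m+1) = A ^ m) (h2 : A * (P * P) = P) (hm : 1 ≤ m) :
    (P ^ (m+1) * A ^ m) * A * (P ^ (m+1) * A ^ m) = P ^ (m+1) * A ^ m := by
  rw [da h1]
  exact t_d h1 h2 hm

lemma ad_comm (h1 : P * A ^ (m+1) = A ^ m) (h2 : A * (P * P) = P) (hm : 1 ≤ m) :
    A * (P ^ (m+1) * A ^ m) = (P ^ (m+1) * A ^ m) * A := by
  rw [ad h2 hm, da h1]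

/-- if P*P*A = P then P = P^(t+1) * A^t -/
lemma c5_aux (h5 : P * P * A = P) : ∀ t, P ^ (t+1) * A ^ t = P := by
  intro t
  induction t with
  | zero => simp
  | succ n ih =>
    calc P ^ (n+2) * A ^ (n+1)
        = P ^ n * ((P * P * A) * A ^ n) := by
          rw [show n+2 = n+1+1 by rfl, pow_succ P (n+1), pow_succ P n, pow_succ' A n]
          simp only [mul_assoc]
      _ = P ^ n * (P * A ^ n) := by rw [h5]
      _ = P ^ (n+1) * A ^ n := by rw [← mul_assoc, ← pow_succ]
      _ = P := ih

lemma c5_d (h5 : P * P * A = P) : P = P ^ (m+1) * A ^ m := (c5_aux h5 m).symm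

lemma t_eq_e_of_comm (h2 : A * (P * P) = P) (hm : 1 ≤ m)
    (hcm : A ^ m * P = P * A ^ m) : P ^ m * A ^ m = A * P := by
  have hc : Commute (A ^ m) P := hcm
  have := (hc.pow_right m).symm.eq
  rw [this]
  exact apow_ppow h2 m hm

lemma star_e (h3 : star (A * P) = A * P) : star P * star A = A * P := by
  rw [← star_mul, h3]

/-- uniqueness of pseudo core "inverse" at a fixed exponent -/
lemma pc_unique (hm : 1 ≤ m) (h1 : P * A ^ (m+1) = A ^ m) (h2 : A * (P * P) = P)
    (h3 : star (A * P) = A * P) {Q : M} (g1 : Q * A ^ (m+1) = A ^ m)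
    (g2 : A * (Q * Q) = Q) (g3 : star (A * Q) = A * Q) : Q = P := by
  have u1 : (A*P) * (A*Q) = A*Q := by
    calc (A*P)*(A*Q) = (A*P)*(A ^ m * Q ^ m) := by rw [apow_ppow g2 m hm]
      _ = ((A*P)*A ^ m)*Q ^ m := by simp only [mul_assoc]
      _ = A ^ m * Q ^ m := by rw [e_apow h1 h2 m le_rfl]
      _ = A*Q := apow_ppow g2 m hm
  have u2 : (A*Q) * (A*P) = A*P := by
    calc (A*Q)*(A*P) = (A*Q)*(A ^ m * P ^ m) := by rw [apow_ppow h2 m hm]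
      _ = ((A*Q)*A ^ m)*P ^ m := by simp only [mul_assoc]
      _ = A ^ m * P ^ m := by rw [e_apow g1 g2 m le_rfl]
      _ = A*P := apow_ppow h2 m hm
  have u3 : A*P = A*Q := by
    calc A*P = star (A*P) := h3.symm
      _ = star ((A*Q)*(A*P)) := by rw [u2]
      _ = star (A*P) * star (A*Q) := by rw [star_mul]
      _ = (A*P)*(A*Q) := by rw [h3, g3]
      _ = A*Q := u1
  have key : P = Q := by
    calc P = P*(A*P) := (p_e h1 h2 hm).symm
      _ = P*(A*Q) := by rw [u3]
      _ = P*(A*(A ^ m * Q ^ (m+1))) := by rw [apow_p g2 m hm]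
      _ = (P*A ^ (m+1)) * Q ^ (m+1) := by rw [pow_succ' A m]; simp only [mul_assoc]
      _ = A ^ m * Q ^ (m+1) := by rw [h1]
      _ = Q := apow_p g2 m hm
  exact key.symm

section Drazin
variable {Y : M} {k : ℕ}

lemma dz_h2 (d2 : Y * A * Y = Y) (d3 : A * Y = Y * A) : A * (Y * Y) = Y := by
  rw [← mul_assoc, d3, d2]

lemma dz_c5 (d2 : Y * A * Y = Y) (d3 : A * Y = Y * A) : Y * Y * A = Y := by
  rw [mul_assoc, ← d3, ← mul_assoc, d2]

lemma dz_aya (d1 : A ^ k * Y * A = A ^ k) : ∀ j, k ≤ j → A ^ j * Y * A = A ^ j := by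
  intro j hj
  have hsplit : A ^ j = A ^ (j-k) * A ^ k := by
    rw [← pow_add, show j-k+k = j by omega]
  calc A ^ j * Y * A = A ^ (j-k) * (A ^ k * Y * A) := by
        rw [hsplit]; simp only [mul_assoc]
    _ = A ^ (j-k) * A ^ k := by rw [d1]
    _ = A ^ j := hsplit.symm

lemma dz_absorb (d1 : A ^ k * Y * A = A ^ k) (d3 : A * Y = Y * A) :
    ∀ j, k ≤ j → A ^ (j+1) * Y = A ^ j := by
  intro j hj
  calc A ^ (j+1) * Y = A ^ j * (A * Y) := by rw [pow_succ]; simp only [mul_assoc]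
    _ = A ^ j * (Y * A) := by rw [d3]
    _ = A ^ j * Y * A := by simp only [mul_assoc]
    _ = A ^ j := dz_aya d1 j hj

lemma dz_aj_yt (d1 : A ^ k * Y * A = A ^ k) (d3 : A * Y = Y * A) :
    ∀ j, k ≤ j → ∀ t, A ^ (j+t) * Y ^ t = A ^ j := by
  intro j hj t
  induction t with
  | zero => simp
  | succ n ih =>
    calc A ^ (j+(n+1)) * Y ^ (n+1) = (A ^ ((j+n)+1) * Y) * Y ^ n := by
          rw [pow_succ' Y n, show j+(n+1) = (j+n)+1 by omega]; simp only [mul_assoc]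
      _ = A ^ (j+n) * Y ^ n := by rw [dz_absorb d1 d3 (j+n) (by omega)]
      _ = A ^ j := ih
end Drazin

/-- uniqueness of elements satisfying the Drazin equations at a common exponent -/
lemma dz_unique {Y Z : M} {n : ℕ} (hn : 1 ≤ n)
    (y1 : A ^ n * Y * A = A ^ n) (y2 : Y * A * Y = Y) (y3 : A * Y = Y * A)
    (z1 : A ^ n * Z * A = A ^ n) (z2 : Z * A * Z = Z) (z3 : A * Z = Z * A) :
    Y = Z := by
  have hz : Commute A Z := z3
  have hZA : ∀ j : ℕ, A ^ j * Z = Z * A ^ j := fun j => (hz.pow_left j).eq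
  have eY : Y = Z * (A * Y) := by
    calc Y = A ^ n * Y ^ (n+1) := (apow_p (dz_h2 y2 y3) n hn).symm
      _ = (A ^ n * Z * A) * Y ^ (n+1) := by rw [z1]
      _ = (Z * A ^ n * A) * Y ^ (n+1) := by rw [hZA n]
      _ = (Z * A ^ (n+1)) * Y ^ (n+1) := by rw [pow_succ A n]; simp only [mul_assoc]
      _ = Z * (A * (A ^ n * Y ^ (n+1))) := by rw [pow_succ' A n]; simp only [mul_assoc]
      _ = Z * (A * Y) := by rw [apow_p (dz_h2 y2 y3) n hn]
  have eZ : Z = Z * (A * Y) := by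
    calc Z = Z ^ (n+1) * A ^ n := (c5_aux (dz_c5 z2 z3) n).symm
      _ = Z ^ (n+1) * (A ^ n * Y * A) := by rw [y1]

      _ = (Z ^ (n+1) * A ^ n) * (Y * A) := by simp only [mul_assoc]
      _ = Z * (Y * A) := by rw [c5_aux (dz_c5 z2 z3) n]
      _ = Z * (A * Y) := by rw [y3]
  rw [eY, ← eZ]

/-- group inverses double commute -/
lemma dc {B X C : M} (hg1 : B * X * B = B) (hg2 : X * B * X = X) (hg3 : B * X = X * B)
    (hc : C * B = B * C) : C * X = X * C := by
  have hbx2 : B * (X * X) = X := by rw [← mul_assoc, hg3, hg2]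
  have hxxb : X * X * B = X := by rw [mul_assoc, ← hg3, ← mul_assoc, hg2]
  have hbx2z : ∀ z, B * (X * (X * z)) = X * z := fun z => by
    rw [← mul_assoc, ← mul_assoc, mul_assoc B X X, hbx2]
  have hxxbz : ∀ z, X * (X * (B * z)) = X * z := fun z => by
    rw [← mul_assoc, ← mul_assoc, hxxb]
  have hcbz : ∀ z, C * (B * z) = B * (C * z) := fun z => by
    rw [← mul_assoc, hc, mul_assoc]
  have hBB : B = B * (X * B) := by rw [← mul_assoc, hg1]
  have step1 : C * X = B * (X * (C * X)) := by
    conv_lhs => rw [show X = B * (X * X) from hbx2.symm]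
    rw [hcbz]
    conv_lhs => rw [hBB]
    simp only [mul_assoc]
    rw [← hcbz, hbx2]
  have step2 : X * C = X * (C * (X * B)) := by
    conv_lhs => rw [show X = X * (X * B) from by rw [← mul_assoc, hxxb]]
    simp only [mul_assoc]
    rw [← hc]
    conv_lhs => rw [hBB]
    rw [hcbz, hxxbz]
  symm
  calc X * C = X * (C * (X * B)) := step2
    _ = X * (C * (B * X)) := by rw [← hg3]
    _ = X * (B * (C * X)) := by rw [show C * (B * X) = B * (C * X) from hcbz X]
    _ = B * (X * (C * X)) := by rw [show X * (B * (C*X)) = B * (X * (C*X)) from by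
          rw [← mul_assoc, ← hg3, mul_assoc]]
    _ = C * X := step1.symm


section GX
variable {X : M} {k : ℕ}

/-- From a group+MP inverse `X` of `A^k` (with `A*X = X*A`), the element
`A^(2k-1) * (X*X)` satisfies the pseudo core equations at exponent `k`. -/
lemma gx_bxx (hg2 : X * A ^ k * X = X) (hg3 : A ^ k * X = X * A ^ k) :
    A ^ k * (X * X) = X := by
  rw [← mul_assoc, hg3, hg2]

lemma gx_bxxz (hg2 : X * A ^ k * X = X) (hg3 : A ^ k * X = X * A ^ k) :
    ∀ z, A ^ k * (X * (X * z)) = X * z := fun z => by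
  rw [← mul_assoc, ← mul_assoc, mul_assoc (A ^ k) X X, gx_bxx hg2 hg3]

lemma gx_alpha (hk : 1 ≤ k) (hg1 : A ^ k * X * A ^ k = A ^ k)
    (hg2 : X * A ^ k * X = X) (hg3 : A ^ k * X = X * A ^ k) (hc : A * X = X * A) :
    (A ^ (2*k-1) * (X * X)) * A ^ (k+1) = A ^ k := by
  have hcx : Commute A X := hc
  have c1 : (X * X) * A ^ (k+1) = A ^ (k+1) * (X * X) :=
    ((hcx.symm.mul_left hcx.symm).pow_right (k+1)).eq
  calc (A ^ (2*k-1) * (X * X)) * A ^ (k+1)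
      = A ^ (2*k-1) * (A ^ (k+1) * (X * X)) := by rw [mul_assoc, c1]
    _ = A ^ (3*k) * (X * X) := by
        rw [← mul_assoc, ← pow_add, show 2*k-1+(k+1) = 3*k by omega]
    _ = A ^ k * (A ^ k * (A ^ k * (X * X))) := by
        rw [show 3*k = k+(k+k) by omega, pow_add, pow_add]; simp only [mul_assoc]
    _ = A ^ k * (A ^ k * X) := by rw [gx_bxx hg2 hg3]
    _ = A ^ k * (X * A ^ k) := by rw [hg3]
    _ = A ^ k := by rw [← mul_assoc, hg1]

lemma gx_beta (hk : 1 ≤ k)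
    (hg2 : X * A ^ k * X = X) (hg3 : A ^ k * X = X * A ^ k) (hc : A * X = X * A) :
    A * ((A ^ (2*k-1) * (X * X)) * (A ^ (2*k-1) * (X * X))) = A ^ (2*k-1) * (X * X) := by
  have hcx : Commute A X := hc
  have hXAz : ∀ z, X * (A ^ (2*k-1) * z) = A ^ (2*k-1) * (X * z) := fun z => by
    rw [← mul_assoc, (hcx.symm.pow_right (2*k-1)).eq, mul_assoc]
  calc A * ((A ^ (2*k-1) * (X * X)) * (A ^ (2*k-1) * (X * X)))
      = A * (A ^ (2*k-1) * (X * (X * (A ^ (2*k-1) * (X * X))))) := by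
        simp only [mul_assoc]
    _ = A * (A ^ (2*k-1) * (X * (A ^ (2*k-1) * (X * (X * X))))) := by rw [hXAz]
    _ = A * (A ^ (2*k-1) * (A ^ (2*k-1) * (X * (X * (X * X))))) := by rw [hXAz]
    _ = A ^ (4*k-1) * (X * (X * (X * X))) := by
        rw [← mul_assoc, ← mul_assoc, ← pow_succ' A (2*k-1), ← pow_add,
          show 2*k-1+1+(2*k-1) = 4*k-1 by omega]
    _ = A ^ (2*k-1) * (A ^ k * (A ^ k * (X * (X * (X * X))))) := by
        rw [show 4*k-1 = (2*k-1)+(k+k) by omega, pow_add, pow_add]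
        simp only [mul_assoc]
    _ = A ^ (2*k-1) * (A ^ k * (X * (X * X))) := by rw [gx_bxxz hg2 hg3]
    _ = A ^ (2*k-1) * (X * X) := by rw [gx_bxxz hg2 hg3]

lemma gx_gamma (hk : 1 ≤ k)
    (hg2 : X * A ^ k * X = X) (hg3 : A ^ k * X = X * A ^ k) :
    A * (A ^ (2*k-1) * (X * X)) = A ^ k * X := by
  calc A * (A ^ (2*k-1) * (X * X))
      = A ^ (2*k) * (X * X) := by
        rw [← mul_assoc, ← pow_succ' A (2*k-1), show 2*k-1+1 = 2*k by omega]
    _ = A ^ k * (A ^ k * (X * X)) := by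
        rw [show 2*k = k+k by omega, pow_add]; simp only [mul_assoc]
    _ = A ^ k * X := by rw [gx_bxx hg2 hg3]

lemma gx_comm (hc : A * X = X * A) :
    A * (A ^ (2*k-1) * (X * X)) = (A ^ (2*k-1) * (X * X)) * A := by
  have hcx : Commute A X := hc
  exact (((Commute.refl A).pow_right (2*k-1)).mul_right (hcx.mul_right hcx)).eq
end GX

section EPW
variable {D : M} {k : ℕ}

lemma epw_idem (d2 : D * A * D = D) : (A*D)*(A*D) = A*D := by
  calc (A*D)*(A*D) = A*(D*A*D) := by simp only [mul_assoc]
    _ = A*D := by rw [d2]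

lemma epw1 (hk : 1 ≤ k) (d2 : D * A * D = D) (d3 : A * D = D * A) :
    A ^ k * D ^ k = A * D := by
  have hcd : Commute A D := d3
  rw [← hcd.mul_pow k]
  exact idem_pow (epw_idem d2) hk

lemma epw2 (hk : 1 ≤ k) (d2 : D * A * D = D) (d3 : A * D = D * A) :
    D ^ k * A ^ k = A * D := by
  have hcd : Commute A D := d3
  rw [← hcd.symm.mul_pow k, show D*A = A*D from d3.symm]
  exact idem_pow (epw_idem d2) hk

lemma epw3 (d1 : A ^ k * D * A = A ^ k) (d3 : A * D = D * A) :
    (A*D) * A ^ k = A ^ k := by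
  have hcd : Commute A D := d3
  calc (A*D)*A ^ k = A*(D*A ^ k) := by simp only [mul_assoc]
    _ = A*(A ^ k*D) := by rw [(hcd.symm.pow_right k).eq]
    _ = A ^ k*(A*D) := by rw [← mul_assoc, ← pow_succ', pow_succ, mul_assoc]
    _ = A ^ k*(D*A) := by rw [d3]
    _ = A ^ k := by rw [← mul_assoc, d1]

lemma epw4 (hk : 1 ≤ k) (d2 : D * A * D = D) (d3 : A * D = D * A) :
    (A*D) * D ^ k = D ^ k := by
  have hDk : D ^ k = D * D ^ (k-1) := by rw [← pow_succ', show k-1+1 = k by omega]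
  calc (A*D)*D ^ k = ((A*D)*D)*D ^ (k-1) := by rw [hDk]; simp only [mul_assoc]
    _ = D*D ^ (k-1) := by rw [show (A*D)*D = D from by rw [d3]; exact d2]
    _ = D ^ k := hDk.symm

lemma ep_g1 (hk : 1 ≤ k) (d1 : A ^ k * D * A = A ^ k) (d2 : D * A * D = D)
    (d3 : A * D = D * A) : A ^ k * D ^ k * A ^ k = A ^ k := by
  rw [epw1 hk d2 d3]; exact epw3 d1 d3

lemma ep_g2 (hk : 1 ≤ k) (d2 : D * A * D = D) (d3 : A * D = D * A) :
    D ^ k * A ^ k * D ^ k = D ^ k := by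
  rw [epw2 hk d2 d3]; exact epw4 hk d2 d3

lemma ep_g3 (hk : 1 ≤ k) (d2 : D * A * D = D) (d3 : A * D = D * A) :
    A ^ k * D ^ k = D ^ k * A ^ k :=
  (epw1 hk d2 d3).trans (epw2 hk d2 d3).symm

lemma ep_s1 (hk : 1 ≤ k) (d2 : D * A * D = D) (d3 : A * D = D * A)
    (hstar : star (A * D) = A * D) : star (A ^ k * D ^ k) = A ^ k * D ^ k := by
  rw [epw1 hk d2 d3]; exact hstar

lemma ep_s2 (hk : 1 ≤ k) (d2 : D * A * D = D) (d3 : A * D = D * A)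
    (hstar : star (A * D) = A * D) : star (D ^ k * A ^ k) = D ^ k * A ^ k := by
  rw [epw2 hk d2 d3]; exact hstar
end EPW

section Cases
variable {P : M} {m : ℕ}

lemma c2_comm (h1 : P * A ^ (m+1) = A ^ m) (h2 : A * (P * P) = P) (hm : 1 ≤ m)
    (hdp : (P ^ (m+1) * A ^ m) * P = P * (P ^ (m+1) * A ^ m)) :
    A ^ m * P = P * A ^ m := by
  have am1p : A ^ (m+1) * P ^ (m+1) = A * P := apow_ppow h2 (m+1) (by omega)
  have lhs : A ^ (m+1) * ((P ^ (m+1) * A ^ m) * P) = A ^ m * P := by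
    calc A ^ (m+1) * ((P ^ (m+1) * A ^ m) * P)
        = (A ^ (m+1) * P ^ (m+1)) * (A ^ m * P) := by simp only [mul_assoc]
      _ = (A*P) * (A ^ m * P) := by rw [am1p]
      _ = ((A*P) * A ^ m) * P := by simp only [mul_assoc]
      _ = A ^ m * P := by rw [e_apow h1 h2 m le_rfl]
  have rhs : A ^ (m+1) * (P * (P ^ (m+1) * A ^ m)) = P * A ^ m := by
    have hp2 : A ^ (m+1) * P ^ (m+2) = P := apow_p h2 (m+1) (by omega)
    calc A ^ (m+1) * (P * (P ^ (m+1) * A ^ m))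
        = (A ^ (m+1) * P ^ (m+2)) * A ^ m := by
          rw [show m+2 = (m+1)+1 by rfl, pow_succ' P (m+1)]; simp only [mul_assoc]
      _ = P * A ^ m := by rw [hp2]
  rw [← lhs, ← rhs, hdp]

lemma c3_comm (h1 : P * A ^ (m+1) = A ^ m) (h2 : A * (P * P) = P) (hm : 1 ≤ m)
    {X' : M} (h13 : A ^ m * X' * A ^ m = A ^ m)
    (hpx : P = X' * A ^ m * (P ^ (m+1) * A ^ m)) :
    A ^ m * P = P * A ^ m := by
  calc A ^ m * P = A ^ m * (X' * A ^ m * (P ^ (m+1) * A ^ m)) :=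
        congrArg (fun z => A ^ m * z) hpx
    _ = (A ^ m * (X' * A ^ m)) * (P ^ (m+1) * A ^ m) := by simp only [mul_assoc]
    _ = A ^ m * (P ^ (m+1) * A ^ m) := by
        rw [show A ^ m * (X' * A ^ m) = A ^ m from by rw [← mul_assoc]; exact h13]
    _ = P * A ^ m := amd h1 h2 hm

lemma c4_comm (h1 : P * A ^ (m+1) = A ^ m) (h4 : A ^ (m+1) * P = A ^ m) :
    A ^ m * P = P * A ^ m := by
  calc A ^ m * P = (P * A ^ (m+1)) * P := by rw [h1]
    _ = P * (A ^ (m+1) * P) := by simp only [mul_assoc]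
    _ = P * A ^ m := by rw [h4]

lemma t_of_c5 (h2 : A * (P * P) = P) (hm : 1 ≤ m) (h5 : P * P * A = P) :
    P ^ m * A ^ m = A * P := by
  rw [← ad h2 hm, ← c5_d h5]

lemma c7_to_c4 (h1 : P * A ^ (m+1) = A ^ m) (h2 : A * (P * P) = P)
    (h3 : star (A * P) = A * P) (hm : 1 ≤ m)
    (h7 : P * A = (P * A) * (A * P)) : A ^ (m+1) * P = A ^ m := by
  have hsPA : star (P*A) = star A * star P := by rw [star_mul]
  have hsAP : star P * star A = A*P := by rw [← star_mul, h3]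
  have s1 : star (P*A) = (A*P) * star (P*A) := by
    conv_lhs => rw [h7]
    rw [star_mul, h3]
  have s2 : star A * (A*P) = (A*P)*(star A * (A*P)) := by
    calc star A * (A*P) = star A * (star P * star A) := by rw [hsAP]
      _ = star (P*A) * star A := by rw [hsPA, mul_assoc]
      _ = ((A*P)*star (P*A)) * star A := by rw [← s1]
      _ = (A*P)*(star (P*A) * star A) := by simp only [mul_assoc]
      _ = (A*P)*(star A * (star P * star A)) := by rw [hsPA]; simp only [mul_assoc]
      _ = (A*P)*(star A * (A*P)) := by rw [hsAP]
  have s3 : (A*P)*A = ((A*P)*A)*(A*P) := by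
    calc (A*P)*A = star (star A * (A*P)) := by rw [star_mul, h3, star_star]
      _ = star ((A*P)*(star A * (A*P))) := by rw [← s2]
      _ = star (star A * (A*P)) * star (A*P) := by rw [star_mul]
      _ = ((A*P)*A)*(A*P) := by rw [star_mul, h3, star_star]
  have s4 : ∀ j, 1 ≤ j → (A*P)*A ^ j = ((A*P)*A ^ j)*(A*P) := by
    intro j hj
    induction j with
    | zero => omega
    | succ n ih =>
      rcases Nat.lt_or_ge 0 n with h | h
      · have ihn := ih h
        calc (A*P)*A ^ (n+1) = ((A*P)*A ^ n)*A := by rw [pow_succ]; simp only [mul_assoc]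
          _ = (((A*P)*A ^ n)*(A*P))*A := by rw [← ihn]
          _ = ((A*P)*A ^ n)*((A*P)*A) := by simp only [mul_assoc]
          _ = ((A*P)*A ^ n)*(((A*P)*A)*(A*P)) := by rw [← s3]
          _ = (((A*P)*A ^ n)*((A*P)*A))*(A*P) := by simp only [mul_assoc]
          _ = ((((A*P)*A ^ n)*(A*P))*A)*(A*P) := by simp only [mul_assoc]
          _ = (((A*P)*A ^ n)*A)*(A*P) := by rw [← ihn]
          _ = ((A*P)*A ^ (n+1))*(A*P) := by rw [pow_succ]; simp only [mul_assoc]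
      · interval_cases n
        simpa [pow_one] using s3
  have s5 : A ^ m = A ^ m * (A*P) := by
    conv_lhs => rw [← e_apow h1 h2 m le_rfl]
    rw [s4 m hm, e_apow h1 h2 m le_rfl]
  calc A ^ (m+1)*P = A ^ m*(A*P) := by rw [pow_succ]; simp only [mul_assoc]
    _ = A ^ m := s5.symm

lemma q61 (h1 : P * A ^ (m+1) = A ^ m) (hm : 1 ≤ m) :
    (P*P*A)*A ^ (m+1) = A ^ m := by
  calc (P*P*A)*A ^ (m+1) = P*(P*A ^ (m+2)) := by
        rw [show m+2 = (m+1)+1 by rfl, pow_succ' A (m+1)]; simp only [mul_assoc]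
    _ = P*A ^ (m+1) := by rw [p_apow h1 (m+1) (by omega)]
    _ = A ^ m := h1

lemma q62 (h2 : A * (P * P) = P) :
    A*((P*P*A)*(P*P*A)) = P*P*A := by
  calc A*((P*P*A)*(P*P*A)) = A*(P*(P*(A*(P*(P*A))))) := by simp only [mul_assoc]
    _ = P*(A*(P*(P*A))) := by rw [h2z h2]
    _ = P*(P*A) := by rw [h2z h2]
    _ = P*P*A := by simp only [mul_assoc]

lemma q63 (h2 : A * (P * P) = P) : A*(P*P*A) = P*A := by
  calc A*(P*P*A) = (A*(P*P))*A := by simp only [mul_assoc]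
    _ = P*A := by rw [h2]

end Cases

section Min3
variable {P Y : M} {m k : ℕ}

lemma m3_eA (h1 : P * A ^ (m+1) = A ^ m) (h2 : A * (P * P) = P)
    (d1 : A ^ k * Y * A = A ^ k) (d3 : A * Y = Y * A) :
    (A*P) * A ^ (k+1) = A ^ (k+1) := by
  calc (A*P)*A ^ (k+1) = (A*P)*(A ^ ((k+1)+m) * Y ^ m) :=
        congrArg (fun z => (A*P)*z) (dz_aj_yt d1 d3 (k+1) (by omega) m).symm
    _ = ((A*P)*A ^ ((k+1)+m))*Y ^ m := by simp only [mul_assoc]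
    _ = A ^ ((k+1)+m)*Y ^ m := by rw [e_apow h1 h2 ((k+1)+m) (by omega)]
    _ = A ^ (k+1) := dz_aj_yt d1 d3 (k+1) (by omega) m

lemma m31 (h1 : P * A ^ (m+1) = A ^ m) (h2 : A * (P * P) = P)
    (d1 : A ^ k * Y * A = A ^ k) (d3 : A * Y = Y * A) :
    (Y*(A*P)) * A ^ (k+1) = A ^ k := by
  have hcy : Commute A Y := d3
  calc (Y*(A*P))*A ^ (k+1) = Y*((A*P)*A ^ (k+1)) := by simp only [mul_assoc]
    _ = Y*A ^ (k+1) := by rw [m3_eA h1 h2 d1 d3]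
    _ = A ^ (k+1)*Y := by rw [(hcy.symm.pow_right (k+1)).eq]
    _ = A ^ k := dz_absorb d1 d3 k le_rfl

lemma m3_eY (h1 : P * A ^ (m+1) = A ^ m) (h2 : A * (P * P) = P) (hm : 1 ≤ m)
    (d2 : Y * A * Y = Y) (d3 : A * Y = Y * A) :
    (A*P)*Y = Y := by
  calc (A*P)*Y = (A*P)*(A ^ m*Y ^ (m+1)) :=
        congrArg (fun z => (A*P)*z) (apow_p (dz_h2 d2 d3) m hm).symm
    _ = ((A*P)*A ^ m)*Y ^ (m+1) := by simp only [mul_assoc]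
    _ = A ^ m*Y ^ (m+1) := by rw [e_apow h1 h2 m le_rfl]
    _ = Y := apow_p (dz_h2 d2 d3) m hm

lemma m32 (h1 : P * A ^ (m+1) = A ^ m) (h2 : A * (P * P) = P) (hm : 1 ≤ m)
    (d2 : Y * A * Y = Y) (d3 : A * Y = Y * A) :
    A*((Y*(A*P))*(Y*(A*P))) = Y*(A*P) := by
  have eYz : ∀ z, (A*P)*(Y*z) = Y*z := fun z => by
    rw [← mul_assoc, m3_eY h1 h2 hm d2 d3]
  calc A*((Y*(A*P))*(Y*(A*P))) = A*(Y*((A*P)*(Y*(A*P)))) := by simp only [mul_assoc]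
    _ = A*(Y*(Y*(A*P))) := by rw [eYz]
    _ = (A*(Y*Y))*(A*P) := by simp only [mul_assoc]
    _ = Y*(A*P) := by rw [dz_h2 d2 d3]

lemma m33 (h1 : P * A ^ (m+1) = A ^ m) (h2 : A * (P * P) = P) (hm : 1 ≤ m)
    (hkm : k ≤ m) (d1 : A ^ k * Y * A = A ^ k) (d3 : A * Y = Y * A) :
    A*(Y*(A*P)) = A*P := by
  have hcy : Commute A Y := d3
  have fA : (A*Y)*A ^ m = A ^ m := by
    calc (A*Y)*A ^ m = A*(A ^ m*Y) := by rw [mul_assoc, (hcy.symm.pow_right m).eq]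
      _ = (A*A ^ m)*Y := by simp only [mul_assoc]
      _ = A ^ (m+1)*Y := by rw [← pow_succ']
      _ = A ^ m := dz_absorb d1 d3 m hkm
  calc A*(Y*(A*P)) = (A*Y)*(A ^ m*P ^ m) := by
        rw [← apow_ppow h2 m hm]; simp only [mul_assoc]
    _ = ((A*Y)*A ^ m)*P ^ m := by simp only [mul_assoc]
    _ = A ^ m*P ^ m := by rw [fA]
    _ = A*P := apow_ppow h2 m hm
end Min3

section Wrap
variable {P : M} {m : ℕ}

lemma star_t_of_comm (h2 : A * (P * P) = P) (h3 : star (A * P) = A * P) (hm : 1 ≤ m)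
    (hcm : A ^ m * P = P * A ^ m) :
    star (P ^ m * A ^ m) = P ^ m * A ^ m := by
  rw [t_eq_e_of_comm h2 hm hcm]; exact h3

lemma star_t_of_c5 (h2 : A * (P * P) = P) (h3 : star (A * P) = A * P) (hm : 1 ≤ m)
    (h5 : P * P * A = P) :
    star (P ^ m * A ^ m) = P ^ m * A ^ m := by
  rw [t_of_c5 h2 hm h5]; exact h3

lemma gx_c5 {X : M} {k : ℕ} (hk : 1 ≤ k)
    (hg2 : X * A ^ k * X = X) (hg3 : A ^ k * X = X * A ^ k) (hc : A * X = X * A) :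
    (A ^ (2*k-1) * (X * X)) * (A ^ (2*k-1) * (X * X)) * A = A ^ (2*k-1) * (X * X) := by
  have hcx : Commute A X := hc
  have hq : Commute A (A ^ (2*k-1) * (X * X)) :=
    ((Commute.refl A).pow_right (2*k-1)).mul_right (hcx.mul_right hcx)
  calc (A ^ (2*k-1) * (X * X)) * (A ^ (2*k-1) * (X * X)) * A
      = A * ((A ^ (2*k-1) * (X * X)) * (A ^ (2*k-1) * (X * X))) :=
        ((hq.mul_right hq).eq).symm
    _ = A ^ (2*k-1) * (X * X) := gx_beta hk hg2 hg3 hc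
end Wrap

end PC
end MonoidPart


section SemigroupGlue
variable [Semigroup S] [StarMul S]

noncomputable instance : Star (WithOne S) :=
  ⟨fun x => WithOne.recOneCoe 1 (fun s => ((star s : S) : WithOne S)) x⟩

@[simp] lemma wstar_coe (x : S) : star (x : WithOne S) = ((star x : S) : WithOne S) := rfl
@[simp] lemma wstar_one : star (1 : WithOne S) = (1 : WithOne S) := rfl

noncomputable instance : StarMul (WithOne S) where
  star_involutive := by
    intro x
    induction x using WithOne.recOneCoe with
    | one => rfl
    | coe a => simp
  star_mul := by
    intro x y
    induction x using WithOne.recOneCoe with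
    | one => simp
    | coe a =>
      induction y using WithOne.recOneCoe with
      | one => simp
      | coe b => simp [← WithOne.coe_mul]

lemma coe_spow {a : S} : ∀ {n : ℕ}, 1 ≤ n →
    ((spow a n : S) : WithOne S) = (a : WithOne S) ^ n := by
  intro n hn
  induction n with
  | zero => omega
  | succ t ih =>
    rcases Nat.lt_or_ge 0 t with h | h
    · have hst : spow a (t+1) = spow a t * a := by
        match t, h with
        | (u+1), _ => rfl
      rw [hst, WithOne.coe_mul, ih h, pow_succ]
    · interval_cases t
      show ((spow a 1 : S) : WithOne S) = _
      rw [show spow a 1 = a from rfl, pow_one]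

variable {a p y d x w : S} {m k : ℕ}

lemma pcore_mon (hk : 0 < k) (h : PCoreEqs a p k) :
    (p : WithOne S) * (a : WithOne S) ^ (k+1) = (a : WithOne S) ^ k ∧
    (a : WithOne S) * ((p : WithOne S) * (p : WithOne S)) = (p : WithOne S) ∧
    star ((a : WithOne S) * (p : WithOne S)) = (a : WithOne S) * (p : WithOne S) := by
  obtain ⟨e1, e2, e3⟩ := h
  refine ⟨?_, ?_, ?_⟩
  · have := congrArg (WithOne.coe (α := S)) e1
    simpa [WithOne.coe_mul, coe_spow (show (1:ℕ) ≤ k+1 by omega),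
      coe_spow (show (1:ℕ) ≤ k from hk)] using this
  · have := congrArg (WithOne.coe (α := S)) e2
    simpa [WithOne.coe_mul] using this
  · have := congrArg (WithOne.coe (α := S)) e3
    simpa [WithOne.coe_mul] using this

lemma pcore_of_mon (hk : 0 < k)
    (H1 : (p : WithOne S) * (a : WithOne S) ^ (k+1) = (a : WithOne S) ^ k)
    (H2 : (a : WithOne S) * ((p : WithOne S) * (p : WithOne S)) = (p : WithOne S))
    (H3 : star ((a : WithOne S) * (p : WithOne S)) = (a : WithOne S) * (p : WithOne S)) :
    PCoreEqs a p k := by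
  refine ⟨?_, ?_, ?_⟩
  · rw [← WithOne.coe_inj]
    simpa [WithOne.coe_mul, coe_spow (show (1:ℕ) ≤ k+1 by omega),
      coe_spow (show (1:ℕ) ≤ k from hk)] using H1
  · rw [← WithOne.coe_inj]
    simpa [WithOne.coe_mul] using H2
  · rw [← WithOne.coe_inj]
    simpa [WithOne.coe_mul] using H3

lemma drazin_mon (hk : 0 < k) (h : DrazinEqs a y k) :
    (a : WithOne S) ^ k * (y : WithOne S) * (a : WithOne S) = (a : WithOne S) ^ k ∧
    (y : WithOne S) * (a : WithOne S) * (y : WithOne S) = (y : WithOne S) ∧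
    (a : WithOne S) * (y : WithOne S) = (y : WithOne S) * (a : WithOne S) := by
  obtain ⟨e1, e2, e3⟩ := h
  refine ⟨?_, ?_, ?_⟩
  · have := congrArg (WithOne.coe (α := S)) e1
    simpa [WithOne.coe_mul, coe_spow (show (1:ℕ) ≤ k from hk)] using this
  · have := congrArg (WithOne.coe (α := S)) e2
    simpa [WithOne.coe_mul] using this
  · have := congrArg (WithOne.coe (α := S)) e3
    simpa [WithOne.coe_mul] using this

lemma drazin_of_mon (hk : 0 < k)
    (H1 : (a : WithOne S) ^ k * (y : WithOne S) * (a : WithOne S) = (a : WithOne S) ^ k)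
    (H2 : (y : WithOne S) * (a : WithOne S) * (y : WithOne S) = (y : WithOne S))
    (H3 : (a : WithOne S) * (y : WithOne S) = (y : WithOne S) * (a : WithOne S)) :
    DrazinEqs a y k := by
  refine ⟨?_, ?_, ?_⟩
  · rw [← WithOne.coe_inj]
    simpa [WithOne.coe_mul, coe_spow (show (1:ℕ) ≤ k from hk)] using H1
  · rw [← WithOne.coe_inj]; simpa [WithOne.coe_mul] using H2
  · rw [← WithOne.coe_inj]; simpa [WithOne.coe_mul] using H3

lemma ginv_mon (hk : 0 < k) (h : IsGroupInv (spow a k) x) :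
    (a : WithOne S) ^ k * (x : WithOne S) * (a : WithOne S) ^ k = (a : WithOne S) ^ k ∧
    (x : WithOne S) * (a : WithOne S) ^ k * (x : WithOne S) = (x : WithOne S) ∧
    (a : WithOne S) ^ k * (x : WithOne S) = (x : WithOne S) * (a : WithOne S) ^ k := by
  obtain ⟨e1, e2, e3⟩ := h
  refine ⟨?_, ?_, ?_⟩
  · have := congrArg (WithOne.coe (α := S)) e1
    simpa [WithOne.coe_mul, coe_spow (show (1:ℕ) ≤ k from hk)] using this
  · have := congrArg (WithOne.coe (α := S)) e2
    simpa [WithOne.coe_mul, coe_spow (show (1:ℕ) ≤ k from hk)] using this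
  · have := congrArg (WithOne.coe (α := S)) e3
    simpa [WithOne.coe_mul, coe_spow (show (1:ℕ) ≤ k from hk)] using this

lemma ginv_of_mon (hk : 0 < k)
    (H1 : (a : WithOne S) ^ k * (x : WithOne S) * (a : WithOne S) ^ k = (a : WithOne S) ^ k)
    (H2 : (x : WithOne S) * (a : WithOne S) ^ k * (x : WithOne S) = (x : WithOne S))
    (H3 : (a : WithOne S) ^ k * (x : WithOne S) = (x : WithOne S) * (a : WithOne S) ^ k) :
    IsGroupInv (spow a k) x := by
  refine ⟨?_, ?_, ?_⟩ <;> rw [← WithOne.coe_inj]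
  · simpa [WithOne.coe_mul, coe_spow (show (1:ℕ) ≤ k from hk)] using H1
  · simpa [WithOne.coe_mul, coe_spow (show (1:ℕ) ≤ k from hk)] using H2
  · simpa [WithOne.coe_mul, coe_spow (show (1:ℕ) ≤ k from hk)] using H3

lemma mpinv_mon (hk : 0 < k) (h : IsMPInv (spow a k) x) :
    star ((a : WithOne S) ^ k * (x : WithOne S)) = (a : WithOne S) ^ k * (x : WithOne S) ∧
    star ((x : WithOne S) * (a : WithOne S) ^ k) = (x : WithOne S) * (a : WithOne S) ^ k := by
  obtain ⟨_, _, e3, e4⟩ := h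
  constructor
  · have := congrArg (WithOne.coe (α := S)) e3
    simp only [← wstar_coe, WithOne.coe_mul, coe_spow (show (1:ℕ) ≤ k from hk)] at this
    exact this
  · have := congrArg (WithOne.coe (α := S)) e4
    simp only [← wstar_coe, WithOne.coe_mul, coe_spow (show (1:ℕ) ≤ k from hk)] at this
    exact this

lemma mpinv_of_mon (hk : 0 < k)
    (H1 : (a : WithOne S) ^ k * (x : WithOne S) * (a : WithOne S) ^ k = (a : WithOne S) ^ k)
    (H2 : (x : WithOne S) * (a : WithOne S) ^ k * (x : WithOne S) = (x : WithOne S))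
    (H3 : star ((a : WithOne S) ^ k * (x : WithOne S)) = (a : WithOne S) ^ k * (x : WithOne S))
    (H4 : star ((x : WithOne S) * (a : WithOne S) ^ k) = (x : WithOne S) * (a : WithOne S) ^ k) :
    IsMPInv (spow a k) x := by
  refine ⟨?_, ?_, ?_, ?_⟩ <;> rw [← WithOne.coe_inj]
  · simpa [WithOne.coe_mul, coe_spow (show (1:ℕ) ≤ k from hk)] using H1
  · simpa [WithOne.coe_mul, coe_spow (show (1:ℕ) ≤ k from hk)] using H2
  · simp only [← wstar_coe, WithOne.coe_mul, coe_spow (show (1:ℕ) ≤ k from hk)]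
    exact H3
  · simp only [← wstar_coe, WithOne.coe_mul, coe_spow (show (1:ℕ) ≤ k from hk)]
    exact H4

lemma is13_mon (hk : 0 < k) (h : Is13Inv (spow a k) x) :
    (a : WithOne S) ^ k * (x : WithOne S) * (a : WithOne S) ^ k = (a : WithOne S) ^ k ∧
    star ((a : WithOne S) ^ k * (x : WithOne S)) = (a : WithOne S) ^ k * (x : WithOne S) := by
  obtain ⟨e1, e2⟩ := h
  constructor
  · have := congrArg (WithOne.coe (α := S)) e1
    simpa [WithOne.coe_mul, coe_spow (show (1:ℕ) ≤ k from hk)] using this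
  · have := congrArg (WithOne.coe (α := S)) e2
    simp only [← wstar_coe, WithOne.coe_mul, coe_spow (show (1:ℕ) ≤ k from hk)] at this
    exact this

lemma is13_of_mon (hk : 0 < k)
    (H1 : (a : WithOne S) ^ k * (x : WithOne S) * (a : WithOne S) ^ k = (a : WithOne S) ^ k)
    (H2 : star ((a : WithOne S) ^ k * (x : WithOne S)) = (a : WithOne S) ^ k * (x : WithOne S)) :
    Is13Inv (spow a k) x := by
  constructor <;> rw [← WithOne.coe_inj]
  · simpa [WithOne.coe_mul, coe_spow (show (1:ℕ) ≤ k from hk)] using H1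
  · simp only [← wstar_coe, WithOne.coe_mul, coe_spow (show (1:ℕ) ≤ k from hk)]
    exact H2

end SemigroupGlue

section Main
variable [Semigroup S] [StarMul S]
variable {a p : S} {m : ℕ}

lemma min2 (hp : IsPCoreWithIndex a p m) :
    ∀ k, 0 < k → IsEP (spow a k) → m ≤ k := by
  rintro k hk ⟨x, hg, hmp⟩
  obtain ⟨hg1, hg2, hg3⟩ := ginv_mon hk hg
  obtain ⟨hm3, hm4⟩ := mpinv_mon hk hmp
  have hc : (a : WithOne S) * (x : WithOne S) = (x : WithOne S) * (a : WithOne S) :=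
    dc hg1 hg2 hg3 ((Commute.refl (a : WithOne S)).pow_right k).eq
  have hco : ((spow a (2*k-1) * (x * x) : S) : WithOne S)
      = (a : WithOne S) ^ (2*k-1) * ((x : WithOne S) * (x : WithOne S)) := by
    simp [WithOne.coe_mul, coe_spow (show (1:ℕ) ≤ 2*k-1 by omega)]
  have hps : PCoreEqs a (spow a (2*k-1) * (x * x)) k := by
    apply pcore_of_mon hk
    · rw [hco]; exact gx_alpha hk hg1 hg2 hg3 hc
    · rw [hco]; exact gx_beta hk hg2 hg3 hc
    · rw [hco, gx_gamma hk hg2 hg3]; exact hm3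
  exact hp.2.2 k _ hk hps

lemma min3 (hp : IsPCoreWithIndex a p m) :
    ∀ k, 0 < k → (∃ y, DrazinEqs a y k) → m ≤ k := by
  rintro k hk ⟨y, hy⟩
  rcases le_or_gt m k with h | h
  · exact h
  · obtain ⟨d1, d2, d3⟩ := drazin_mon hk hy
    obtain ⟨H1, H2, H3⟩ := pcore_mon hp.1 hp.2.1
    have hq : PCoreEqs a (y * (a * p)) k := by
      apply pcore_of_mon hk
      · rw [WithOne.coe_mul, WithOne.coe_mul]
        exact m31 H1 H2 d1 d3
      · rw [WithOne.coe_mul, WithOne.coe_mul]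
        exact m32 H1 H2 hp.1 d2 d3
      · rw [WithOne.coe_mul, WithOne.coe_mul, m33 H1 H2 hp.1 (le_of_lt h) d1 d3]
        exact H3
    exact hp.2.2 k _ hk hq

lemma to_dmp (hp : IsPCoreWithIndex a p m)
    (hT : star ((p : WithOne S) ^ m * (a : WithOne S) ^ m)
        = (p : WithOne S) ^ m * (a : WithOne S) ^ m) :
    IsStarDMPWithIndex a m := by
  have hm : 0 < m := hp.1
  obtain ⟨H1, H2, H3⟩ := pcore_mon hm hp.2.1
  have hwco : ((spow (spow p (m+1) * spow a m) m : S) : WithOne S)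
      = ((p : WithOne S) ^ (m+1) * (a : WithOne S) ^ m) ^ m := by
    rw [coe_spow (show (1:ℕ) ≤ m from hm), WithOne.coe_mul,
      coe_spow (show (1:ℕ) ≤ m+1 by omega), coe_spow (show (1:ℕ) ≤ m from hm)]
  have hsAD : star ((a : WithOne S) * ((p : WithOne S) ^ (m+1) * (a : WithOne S) ^ m))
      = (a : WithOne S) * ((p : WithOne S) ^ (m+1) * (a : WithOne S) ^ m) := by
    rw [ad H2 hm]; exact hT
  have d1 := amda H1 H2 hm
  have d2 := dad H1 H2 hm
  have d3 := ad_comm H1 H2 hm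
  refine ⟨hm, ⟨spow (spow p (m+1) * spow a m) m, ?_, ?_⟩, min2 hp⟩
  · apply ginv_of_mon hm
    · rw [hwco]; exact ep_g1 hm d1 d2 d3
    · rw [hwco]; exact ep_g2 hm d2 d3
    · rw [hwco]; exact ep_g3 hm d2 d3
  · apply mpinv_of_mon hm
    · rw [hwco]; exact ep_g1 hm d1 d2 d3
    · rw [hwco]; exact ep_g2 hm d2 d3
    · rw [hwco]; exact ep_s1 hm d2 d3 hsAD
    · rw [hwco]; exact ep_s2 hm d2 d3 hsAD

lemma i1_to_2 (h : IsStarDMPWithIndex a m) :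
    ∃ p, IsPCoreWithIndex a p m ∧ a * p = p * a := by
  obtain ⟨hm, ⟨x, hg, hmp⟩, hminEP⟩ := h
  obtain ⟨hg1, hg2, hg3⟩ := ginv_mon hm hg
  obtain ⟨hm3, hm4⟩ := mpinv_mon hm hmp
  have hc : (a : WithOne S) * (x : WithOne S) = (x : WithOne S) * (a : WithOne S) :=
    dc hg1 hg2 hg3 ((Commute.refl (a : WithOne S)).pow_right m).eq
  have hco : ((spow a (2*m-1) * (x * x) : S) : WithOne S)
      = (a : WithOne S) ^ (2*m-1) * ((x : WithOne S) * (x : WithOne S)) := by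
    simp [WithOne.coe_mul, coe_spow (show (1:ℕ) ≤ 2*m-1 by omega)]
  have hps : PCoreEqs a (spow a (2*m-1) * (x * x)) m := by
    apply pcore_of_mon hm
    · rw [hco]; exact gx_alpha hm hg1 hg2 hg3 hc
    · rw [hco]; exact gx_beta hm hg2 hg3 hc
    · rw [hco, gx_gamma hm hg2 hg3]; exact hm3
  refine ⟨spow a (2*m-1) * (x * x), ⟨hm, hps, ?_⟩, ?_⟩
  · -- minimality of the pseudo core index
    intro k y hk hy
    rcases le_or_gt m k with hle | hlt
    · exact hle
    · obtain ⟨Y1, Y2, Y3⟩ := pcore_mon hk hy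
      have dy1 := amda Y1 Y2 hk
      have dy2 := dad Y1 Y2 hk
      have dy3 := ad_comm Y1 Y2 hk
      have Ry1 : (a : WithOne S) ^ m * ((y : WithOne S) ^ (k+1) * (a : WithOne S) ^ k)
          * (a : WithOne S) = (a : WithOne S) ^ m := dz_aya dy1 m (le_of_lt hlt)
      obtain ⟨G1, G2, G3⟩ := pcore_mon hm hps
      have G5 : (↑(spow a (2*m-1) * (x * x)) : WithOne S) * ↑(spow a (2*m-1) * (x * x))
          * (a : WithOne S) = ↑(spow a (2*m-1) * (x * x)) := by
        rw [hco]; exact gx_c5 hm hg2 hg3 hc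
      have hPD := c5_d (m := m) G5
      have pd1 : (a : WithOne S) ^ m * ↑(spow a (2*m-1) * (x * x)) * (a : WithOne S)
          = (a : WithOne S) ^ m := by
        have := amda G1 G2 hm; rwa [← hPD] at this
      have pd2 : ↑(spow a (2*m-1) * (x * x)) * (a : WithOne S) * ↑(spow a (2*m-1) * (x * x))
          = (↑(spow a (2*m-1) * (x * x)) : WithOne S) := by
        have := dad G1 G2 hm; rwa [← hPD] at this
      have pd3 : (a : WithOne S) * ↑(spow a (2*m-1) * (x * x))
          = ↑(spow a (2*m-1) * (x * x)) * (a : WithOne S) := by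
        have := ad_comm G1 G2 hm; rwa [← hPD] at this
      have huniq : (y : WithOne S) ^ (k+1) * (a : WithOne S) ^ k
          = (↑(spow a (2*m-1) * (x * x)) : WithOne S) :=
        dz_unique hm Ry1 dy2 dy3 pd1 pd2 pd3
      have hstar : star ((a : WithOne S) * ((y : WithOne S) ^ (k+1) * (a : WithOne S) ^ k))
          = (a : WithOne S) * ((y : WithOne S) ^ (k+1) * (a : WithOne S) ^ k) := by
        rw [huniq, hco, gx_gamma hm hg2 hg3]; exact hm3
      have hwco : ((spow (spow y (k+1) * spow a k) k : S) : WithOne S)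
          = ((y : WithOne S) ^ (k+1) * (a : WithOne S) ^ k) ^ k := by
        rw [coe_spow (show (1:ℕ) ≤ k from hk), WithOne.coe_mul,
          coe_spow (show (1:ℕ) ≤ k+1 by omega), coe_spow (show (1:ℕ) ≤ k from hk)]
      have hEP : IsEP (spow a k) := by
        refine ⟨spow (spow y (k+1) * spow a k) k,
          ginv_of_mon hk ?_ ?_ ?_, mpinv_of_mon hk ?_ ?_ ?_ ?_⟩
        · rw [hwco]; exact ep_g1 hk dy1 dy2 dy3
        · rw [hwco]; exact ep_g2 hk dy2 dy3
        · rw [hwco]; exact ep_g3 hk dy2 dy3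
        · rw [hwco]; exact ep_g1 hk dy1 dy2 dy3
        · rw [hwco]; exact ep_g2 hk dy2 dy3
        · rw [hwco]; exact ep_s1 hk dy2 dy3 hstar
        · rw [hwco]; exact ep_s2 hk dy2 dy3 hstar
      exact absurd (hminEP k hk hEP) (by omega)
  · rw [← WithOne.coe_inj, WithOne.coe_mul a (spow a (2*m-1) * (x * x)),
      WithOne.coe_mul (spow a (2*m-1) * (x * x)) a, hco]
    exact gx_comm hc

end Main

section Main2
variable [Semigroup S] [StarMul S]
variable {a p : S} {m : ℕ}

lemma comm_coe {b c : S} (h : b * c = c * b) :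
    (b : WithOne S) * (c : WithOne S) = (c : WithOne S) * (b : WithOne S) := by
  have := congrArg (WithOne.coe (α := S)) h
  simpa [WithOne.coe_mul] using this

lemma c5_of_comm (hp : IsPCoreWithIndex a p m) (hcomm : a * p = p * a) :
    (p : WithOne S) * (p : WithOne S) * (a : WithOne S) = (p : WithOne S) := by
  obtain ⟨H1, H2, H3⟩ := pcore_mon hp.1 hp.2.1
  have hcC : Commute (a : WithOne S) (p : WithOne S) := comm_coe hcomm
  rw [← (hcC.mul_right hcC).eq]
  exact H2

lemma i2_to_1 : (∃ p, IsPCoreWithIndex a p m ∧ a * p = p * a) → IsStarDMPWithIndex a m := by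
  rintro ⟨p, hp, hcomm⟩
  obtain ⟨H1, H2, H3⟩ := pcore_mon hp.1 hp.2.1
  exact to_dmp hp (star_t_of_c5 H2 H3 hp.1 (c5_of_comm hp hcomm))

lemma drazin_self (hp : IsPCoreWithIndex a p m)
    (c5 : (p : WithOne S) * (p : WithOne S) * (a : WithOne S) = (p : WithOne S)) :
    IsDrazinWithIndex a p m := by
  obtain ⟨H1, H2, H3⟩ := pcore_mon hp.1 hp.2.1
  have hPD := c5_d (m := m) c5
  refine ⟨hp.1, drazin_of_mon hp.1 ?_ ?_ ?_, min3 hp⟩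
  · have := amda H1 H2 hp.1; rwa [← hPD] at this
  · have := dad H1 H2 hp.1; rwa [← hPD] at this
  · have := ad_comm H1 H2 hp.1; rwa [← hPD] at this

lemma i2_to_3 : (∃ p, IsPCoreWithIndex a p m ∧ a * p = p * a) →
    ∃ p d, IsPCoreWithIndex a p m ∧ IsDrazinWithIndex a d m ∧ d * p = p * d := by
  rintro ⟨p, hp, hcomm⟩
  exact ⟨p, p, hp, drazin_self hp (c5_of_comm hp hcomm), rfl⟩

lemma i2_to_4 : (∃ p, IsPCoreWithIndex a p m ∧ a * p = p * a) →
    ∃ p d x, IsPCoreWithIndex a p m ∧ IsDrazinWithIndex a d m ∧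
      Is13Inv (spow a m) x ∧ p = x * spow a m * d := by
  rintro ⟨p, hp, hcomm⟩
  obtain ⟨H1, H2, H3⟩ := pcore_mon hp.1 hp.2.1
  have hm : 0 < m := hp.1
  have c5 := c5_of_comm hp hcomm
  have hpmco : ((spow p m : S) : WithOne S) = (p : WithOne S) ^ m :=
    coe_spow (show (1:ℕ) ≤ m from hm)
  refine ⟨p, p, spow p m, hp, drazin_self hp c5, is13_of_mon hm ?_ ?_, ?_⟩
  · rw [hpmco, apow_ppow H2 m hm]
    exact e_apow H1 H2 m le_rfl
  · rw [hpmco, apow_ppow H2 m hm]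
    exact H3
  · rw [← WithOne.coe_inj, WithOne.coe_mul (spow p m * spow a m) p,
      WithOne.coe_mul (spow p m) (spow a m), hpmco,
      coe_spow (show (1:ℕ) ≤ m from hm), t_of_c5 H2 hm c5]
    exact (e_p H2).symm

lemma i2_to_5 : (∃ p, IsPCoreWithIndex a p m ∧ a * p = p * a) →
    ∃ p, IsPCoreWithIndex a p m ∧ spow a (m+1) * p = spow a m := by
  rintro ⟨p, hp, hcomm⟩
  obtain ⟨H1, H2, H3⟩ := pcore_mon hp.1 hp.2.1
  have hcC : Commute (a : WithOne S) (p : WithOne S) := comm_coe hcomm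
  refine ⟨p, hp, ?_⟩
  rw [← WithOne.coe_inj, WithOne.coe_mul (spow a (m+1)) p,
    coe_spow (show (1:ℕ) ≤ m+1 by omega), coe_spow (show (1:ℕ) ≤ m from hp.1),
    (hcC.pow_left (m+1)).eq]
  exact H1

lemma i2_to_6 : (∃ p, IsPCoreWithIndex a p m ∧ a * p = p * a) →
    ∃ p, IsPCoreWithIndex a p m ∧ p * p * a = p := by
  rintro ⟨p, hp, hcomm⟩
  refine ⟨p, hp, ?_⟩
  rw [← WithOne.coe_inj, WithOne.coe_mul (p*p) a, WithOne.coe_mul p p]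
  exact c5_of_comm hp hcomm

lemma i2_to_7 : (∃ p, IsPCoreWithIndex a p m ∧ a * p = p * a) →
    ∃ p, IsPCoreWithIndex a p m ∧ star (p * a) = p * a := by
  rintro ⟨p, hp, hcomm⟩
  obtain ⟨H1, H2, H3⟩ := pcore_mon hp.1 hp.2.1
  have hc := comm_coe hcomm
  refine ⟨p, hp, ?_⟩
  rw [← WithOne.coe_inj]
  simp only [← wstar_coe, WithOne.coe_mul]
  rw [← hc]
  exact H3

lemma i2_to_8 : (∃ p, IsPCoreWithIndex a p m ∧ a * p = p * a) →
    ∃ p, IsPCoreWithIndex a p m ∧ (a * p) * (p * a) = (p * a) * (a * p) := by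
  rintro ⟨p, hp, hcomm⟩
  refine ⟨p, hp, ?_⟩
  rw [← WithOne.coe_inj]
  simp only [WithOne.coe_mul]
  rw [← comm_coe hcomm]

lemma i5_to_1 : (∃ p, IsPCoreWithIndex a p m ∧ spow a (m+1) * p = spow a m) →
    IsStarDMPWithIndex a m := by
  rintro ⟨p, hp, h5⟩
  obtain ⟨H1, H2, H3⟩ := pcore_mon hp.1 hp.2.1
  have h5c : (a : WithOne S) ^ (m+1) * (p : WithOne S) = (a : WithOne S) ^ m := by
    have := congrArg (WithOne.coe (α := S)) h5
    simpa [WithOne.coe_mul, coe_spow (show (1:ℕ) ≤ m+1 by omega),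
      coe_spow (show (1:ℕ) ≤ m from hp.1)] using this
  exact to_dmp hp (star_t_of_comm H2 H3 hp.1 (c4_comm H1 h5c))

lemma i6_to_1 : (∃ p, IsPCoreWithIndex a p m ∧ p * p * a = p) →
    IsStarDMPWithIndex a m := by
  rintro ⟨p, hp, h6⟩
  obtain ⟨H1, H2, H3⟩ := pcore_mon hp.1 hp.2.1
  have h6c : (p : WithOne S) * (p : WithOne S) * (a : WithOne S) = (p : WithOne S) := by
    have := congrArg (WithOne.coe (α := S)) h6
    simpa [WithOne.coe_mul] using this
  exact to_dmp hp (star_t_of_c5 H2 H3 hp.1 h6c)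

lemma i7_to_1 : (∃ p, IsPCoreWithIndex a p m ∧ star (p * a) = p * a) →
    IsStarDMPWithIndex a m := by
  rintro ⟨p, hp, h7⟩
  obtain ⟨H1, H2, H3⟩ := pcore_mon hp.1 hp.2.1
  have h7c : star ((p : WithOne S) * (a : WithOne S)) = (p : WithOne S) * (a : WithOne S) := by
    have := congrArg (WithOne.coe (α := S)) h7
    simp only [← wstar_coe, WithOne.coe_mul] at this
    exact this
  have hQ : (p : WithOne S) * (p : WithOne S) * (a : WithOne S) = (p : WithOne S) :=
    pc_unique hp.1 H1 H2 H3 (q61 H1 hp.1) (q62 H2)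
      (by rw [q63 H2]; exact h7c)
  exact to_dmp hp (star_t_of_c5 H2 H3 hp.1 hQ)

lemma i8_to_1 : (∃ p, IsPCoreWithIndex a p m ∧ (a * p) * (p * a) = (p * a) * (a * p)) →
    IsStarDMPWithIndex a m := by
  rintro ⟨p, hp, h8⟩
  obtain ⟨H1, H2, H3⟩ := pcore_mon hp.1 hp.2.1
  have h8c : ((a : WithOne S) * (p : WithOne S)) * ((p : WithOne S) * (a : WithOne S))
      = ((p : WithOne S) * (a : WithOne S)) * ((a : WithOne S) * (p : WithOne S)) := by
    have := congrArg (WithOne.coe (α := S)) h8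
    simpa [WithOne.coe_mul] using this
  have lhs : ((a : WithOne S) * (p : WithOne S)) * ((p : WithOne S) * (a : WithOne S))
      = (p : WithOne S) * (a : WithOne S) := by
    calc ((a:WithOne S)*(p:WithOne S))*((p:WithOne S)*(a:WithOne S))
        = ((a:WithOne S)*((p:WithOne S)*(p:WithOne S)))*(a:WithOne S) := by
          simp only [mul_assoc]
      _ = (p:WithOne S)*(a:WithOne S) := by rw [H2]
  have h7m : (p : WithOne S) * (a : WithOne S)
      = ((p : WithOne S) * (a : WithOne S)) * ((a : WithOne S) * (p : WithOne S)) := by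
    rw [← h8c]; exact lhs.symm
  have h4 := c7_to_c4 H1 H2 H3 hp.1 h7m
  exact to_dmp hp (star_t_of_comm H2 H3 hp.1 (c4_comm H1 h4))

lemma i3_to_1 : (∃ p d, IsPCoreWithIndex a p m ∧ IsDrazinWithIndex a d m ∧ d * p = p * d) →
    IsStarDMPWithIndex a m := by
  rintro ⟨p, d, hp, hd, hcm⟩
  obtain ⟨H1, H2, H3⟩ := pcore_mon hp.1 hp.2.1
  obtain ⟨e1, e2, e3⟩ := drazin_mon hp.1 hd.2.1
  have hDeq : (d : WithOne S) = (p : WithOne S) ^ (m+1) * (a : WithOne S) ^ m :=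
    dz_unique hp.1 e1 e2 e3 (amda H1 H2 hp.1) (dad H1 H2 hp.1) (ad_comm H1 H2 hp.1)
  have hcmc := comm_coe hcm
  rw [hDeq] at hcmc
  exact to_dmp hp (star_t_of_comm H2 H3 hp.1 (c2_comm H1 H2 hp.1 hcmc))

lemma i4_to_1 : (∃ p d x, IsPCoreWithIndex a p m ∧ IsDrazinWithIndex a d m ∧
      Is13Inv (spow a m) x ∧ p = x * spow a m * d) →
    IsStarDMPWithIndex a m := by
  rintro ⟨p, d, x, hp, hd, h13, hpx⟩
  obtain ⟨H1, H2, H3⟩ := pcore_mon hp.1 hp.2.1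
  obtain ⟨e1, e2, e3⟩ := drazin_mon hp.1 hd.2.1
  have hDeq : (d : WithOne S) = (p : WithOne S) ^ (m+1) * (a : WithOne S) ^ m :=
    dz_unique hp.1 e1 e2 e3 (amda H1 H2 hp.1) (dad H1 H2 hp.1) (ad_comm H1 H2 hp.1)
  obtain ⟨x1, x2⟩ := is13_mon hp.1 h13
  have hpxc : (p : WithOne S) = (x : WithOne S) * (a : WithOne S) ^ m
      * ((p : WithOne S) ^ (m+1) * (a : WithOne S) ^ m) := by
    have := congrArg (WithOne.coe (α := S)) hpx
    rw [WithOne.coe_mul (x * spow a m) d, WithOne.coe_mul x (spow a m),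
      coe_spow (show (1:ℕ) ≤ m from hp.1), hDeq] at this
    exact this
  exact to_dmp hp (star_t_of_comm H2 H3 hp.1 (c3_comm H1 H2 hp.1 x1 hpxc))

end Main2

end StarDMP

/-- Theorem 2.10: `a` is *-DMP with index `m` iff the pseudo core inverse `a^Ⓓ` with
index `m` exists and any one of the seven listed conditions holds. -/
theorem stmt_6 [Semigroup S] [StarMul S] (a : S) (m : ℕ) :
    List.TFAE
      [ IsStarDMPWithIndex a m,
        ∃ p, IsPCoreWithIndex a p m ∧ a * p = p * a,
        ∃ p d, IsPCoreWithIndex a p m ∧ IsDrazinWithIndex a d m ∧ d * p = p * d,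
        ∃ p d x, IsPCoreWithIndex a p m ∧ IsDrazinWithIndex a d m ∧
          Is13Inv (spow a m) x ∧ p = x * spow a m * d,
        ∃ p, IsPCoreWithIndex a p m ∧ spow a (m + 1) * p = spow a m,
        ∃ p, IsPCoreWithIndex a p m ∧ p * p * a = p,
        ∃ p, IsPCoreWithIndex a p m ∧ star (p * a) = p * a,
        ∃ p, IsPCoreWithIndex a p m ∧ (a * p) * (p * a) = (p * a) * (a * p) ] := by
  tfae_have 1 → 2 := StarDMP.i1_to_2
  tfae_have 2 → 1 := StarDMP.i2_to_1
  tfae_have 2 → 3 := StarDMP.i2_to_3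
  tfae_have 2 → 4 := StarDMP.i2_to_4
  tfae_have 2 → 5 := StarDMP.i2_to_5
  tfae_have 2 → 6 := StarDMP.i2_to_6
  tfae_have 2 → 7 := StarDMP.i2_to_7
  tfae_have 2 → 8 := StarDMP.i2_to_8
  tfae_have 3 → 1 := StarDMP.i3_to_1
  tfae_have 4 → 1 := StarDMP.i4_to_1
  tfae_have 5 → 1 := StarDMP.i5_to_1
  tfae_have 6 → 1 := StarDMP.i6_to_1
  tfae_have 7 → 1 := StarDMP.i7_to_1
  tfae_have 8 → 1 := StarDMP.i8_to_1
  tfae_finish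
end

section
/- Let S be a *-semigroup and a ∈ S. Then the following are equivalent: (1) a is *-DMP with index m; (2) m is the smallest positive integer for which there exists x ∈ S with x a^{m+1} = a^m, a x^2 = x and (x^m a^m)* = x^m a^m; (3) m is the smallest positive integer for which there exists x ∈ S with x a^{m+1} = a^m, a x = x a and (x^m a^m)* = x^m a^m. -/
variable {S : Type*}

lemma pow_mul_pow {M : Type*} [Monoid M] (A : M) {p q r : ℕ} (h : p + q = r) :
    A^p * A^q = A^r := by rw [← pow_add, h]

lemma dc_aux {M : Type*} [Monoid M] {b y c : M} (h1 : b*y*b = b) (h2 : y*b*y = y)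
    (h3 : b*y = y*b) (h4 : c*b = b*c) : c*y = y*c := by
  have e1 : b*b*y = b := by rw [mul_assoc, h3, ← mul_assoc, h1]
  have e2 : y*y*b = y := by rw [mul_assoc, ← h3, ← mul_assoc, h2]
  have e2' : b*y*y = y := by rw [h3, h2]
  have t1 : b*y*c*b = b*c := by rw [mul_assoc (b*y), h4, ← mul_assoc, h1]
  have t2 : b*c*b*y = b*c := by rw [← h4, mul_assoc c, mul_assoc c, e1, h4]
  have hA : b*c*y = y*(b*c) := by
    calc b*c*y = (b*y*c*b)*y := by rw [t1]
      _ = y*b*c*b*y := by rw [h3]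
      _ = y*(b*c*b*y) := by simp only [mul_assoc]
      _ = y*(b*c) := by rw [t2]
  calc c*y = c*(b*y*y) := by rw [e2']
    _ = b*c*(y*y) := by rw [← mul_assoc, ← mul_assoc, h4, mul_assoc]
    _ = (b*c*y)*y := by rw [mul_assoc (b*c)]
    _ = (y*(b*c))*y := by rw [hA]
    _ = y*(b*c*y) := by simp only [mul_assoc]
    _ = y*(y*(b*c)) := by rw [hA]
    _ = (y*y*b)*c := by simp only [mul_assoc]
    _ = y*c := by rw [e2]

lemma f2_lemma {M : Type*} [Monoid M] (A X : M) (j : ℕ) (H1 : X * A^(j+2) = A^(j+1)) :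
    ∀ n, X^(n+1) * A^(j+n+2) = A^(j+1) := by
  intro n
  induction n with
  | zero => simpa using H1
  | succ n ih =>
    calc X^(n+2) * A^(j+n+3)
        = X^(n+1)*X*(A^(j+2)*A^(n+1)) := by
          rw [pow_succ, pow_mul_pow A (show (j+2)+(n+1) = j+n+3 by omega)]
      _ = X^(n+1)*(X*A^(j+2))*A^(n+1) := by simp only [mul_assoc]
      _ = X^(n+1)*A^(j+1)*A^(n+1) := by rw [H1]
      _ = X^(n+1)*A^(j+n+2) := by
          rw [mul_assoc, pow_mul_pow A (show (j+1)+(n+1) = j+n+2 by omega)]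
      _ = A^(j+1) := ih

/-- Monoid-level core of (2) ⟹ (1). -/
lemma m21 {M : Type*} [Monoid M] (A X : M) (j : ℕ)
    (H1 : X * A^(j+2) = A^(j+1)) (H2 : A*(X*X) = X) :
    A^(j+1) * (X^(j+2)*A^(j+1))^(j+1) * A^(j+1) = A^(j+1) ∧
    (X^(j+2)*A^(j+1))^(j+1) * A^(j+1) * (X^(j+2)*A^(j+1))^(j+1) = (X^(j+2)*A^(j+1))^(j+1) ∧
    A^(j+1) * (X^(j+2)*A^(j+1))^(j+1) = X^(j+1)*A^(j+1) ∧
    (X^(j+2)*A^(j+1))^(j+1) * A^(j+1) = X^(j+1)*A^(j+1) := by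
  have f2 := f2_lemma A X j H1
  have f1 : ∀ n, A * X^(n+2) = X^(n+1) := by
    intro n
    calc A * X^(n+2) = A*(X*X*X^n) := by
          rw [← pow_mul_pow X (show 2+n = n+2 by omega), pow_two]
      _ = (A*(X*X))*X^n := by simp only [mul_assoc]
      _ = X * X^n := by rw [H2]
      _ = X^(n+1) := (pow_succ' X n).symm
  have f3 : ∀ n, A^(n+1) * X^(n+2) = X := by
    intro n
    induction n with
    | zero => simpa [pow_one, pow_two] using H2
    | succ n ih =>
      calc A^(n+2) * X^(n+3) = A^(n+1)*(A*X^(n+3)) := by rw [pow_succ, mul_assoc]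
        _ = A^(n+1)*X^(n+2) := by rw [f1 (n+1)]
        _ = X := ih
  set D := X^(j+2)*A^(j+1) with hD
  set P := X^(j+1)*A^(j+1) with hP
  have hAD : A*D = P := by
    rw [hD, ← mul_assoc, f1 j, hP]
  have hDA : D*A = P := by
    rw [hD, hP, mul_assoc, ← pow_succ, pow_succ X (j+1), mul_assoc, H1]
  have hPB : P * A^(j+1) = A^(j+1) := by
    rw [hP, mul_assoc, pow_mul_pow A (show (j+1)+(j+1) = j+j+2 by omega)]
    exact f2 j
  have hD2 : D*D = X^(j+3)*A^(j+1) := by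
    calc D*D = X^(j+2)*(A^(j+1)*X^(j+2))*A^(j+1) := by rw [hD]; simp only [mul_assoc]
      _ = X^(j+2)*X*A^(j+1) := by rw [f3 j, mul_assoc]
      _ = X^(j+3)*A^(j+1) := by rw [← pow_succ]
  have hPP : P*P = P := by
    calc P*P = (A*D)*(D*A) := by rw [hAD, hDA]
      _ = A*(X^(j+2)*(A^(j+1)*X^(j+2))*A^(j+1))*A := by rw [hD]; simp only [mul_assoc]
      _ = A*(X^(j+2)*X*A^(j+1))*A := by rw [f3 j, mul_assoc]
      _ = (A*X^(j+3))*(A^(j+1)*A) := by rw [← pow_succ]; simp only [mul_assoc]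
      _ = X^(j+2)*A^(j+2) := by rw [f1 (j+1), ← pow_succ]
      _ = X^(j+1)*(X*A^(j+2)) := by rw [pow_succ, mul_assoc]
      _ = P := by rw [H1, hP]
  have hPD : P*D = D := by
    calc P*D = X^(j+1)*(A^(j+1)*X^(j+2))*A^(j+1) := by rw [hP, hD]; simp only [mul_assoc]
      _ = X^(j+1)*X*A^(j+1) := by rw [f3 j, mul_assoc]
      _ = D := by rw [← pow_succ, hD]
  have hcAD : Commute A D := hAD.trans hDA.symm
  have hPpow : ∀ n, P^(n+1) = P := by
    intro n
    induction n with
    | zero => exact pow_one P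
    | succ n ih => rw [pow_succ, ih, hPP]
  have hBY : A^(j+1) * D^(j+1) = P := by
    rw [← Commute.mul_pow hcAD, hAD, hPpow]
  have hYB : D^(j+1) * A^(j+1) = P := by
    rw [← Commute.mul_pow hcAD.symm, hDA, hPpow]
  have hPY : P * D^(j+1) = D^(j+1) := by
    rw [pow_succ' D j, ← mul_assoc, hPD]
  refine ⟨?_, ?_, ?_, ?_⟩
  · rw [hBY, hPB]
  · rw [hYB, hPY]
  · exact hBY
  · exact hYB

/-- Monoid-level core of (1) ⟹ (3). -/
lemma m13 {M : Type*} [Monoid M] (A Y : M) (j : ℕ)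
    (h1 : A^(j+1)*Y*A^(j+1) = A^(j+1)) (h2 : Y*A^(j+1)*Y = Y)
    (h3 : A^(j+1)*Y = Y*A^(j+1)) :
    (A^(2*j+1)*(Y*Y)) * A^(j+2) = A^(j+1) ∧
    A*(A^(2*j+1)*(Y*Y)) = (A^(2*j+1)*(Y*Y))*A ∧
    (A^(2*j+1)*(Y*Y))^(j+1) * A^(j+1) = Y * A^(j+1) := by
  have haY : A*Y = Y*A :=
    dc_aux h1 h2 h3 ((pow_succ' A (j+1)).symm.trans (pow_succ A (j+1)))
  have hcAY : Commute A Y := haY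
  have hYBB : Y*A^(j+1)*A^(j+1) = A^(j+1) := by rw [← h3, h1]
  have hYB2 : Y*(A^(j+1)*A^(j+1)) = A^(j+1) := by rw [← mul_assoc, hYBB]
  have hc : Commute (A^(2*j+1)) (Y*Y) :=
    (hcAY.pow_left (2*j+1)).mul_right (hcAY.pow_left (2*j+1))
  have claim : ∀ n, Y^(n+1) * A^((j+1)*(n+1)) = Y * A^(j+1) := by
    intro n
    induction n with
    | zero => simp
    | succ n ih =>
      calc Y^(n+2) * A^((j+1)*(n+2))
          = Y*Y^(n+1)*(A^((j+1)*(n+1))*A^(j+1)) := by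
            rw [pow_succ' Y (n+1),
              pow_mul_pow A (show (j+1)*(n+1)+(j+1) = (j+1)*(n+2) by ring)]
        _ = Y*(Y^(n+1)*A^((j+1)*(n+1)))*A^(j+1) := by simp only [mul_assoc]
        _ = Y*(Y*A^(j+1))*A^(j+1) := by rw [ih]
        _ = Y*(Y*(A^(j+1)*A^(j+1))) := by simp only [mul_assoc]
        _ = Y*A^(j+1) := by rw [hYB2]
  refine ⟨?_, ?_, ?_⟩
  · calc (A^(2*j+1)*(Y*Y))*A^(j+2)
        = (Y*Y)*A^(2*j+1)*A^(j+2) := by rw [hc.eq]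
      _ = Y*(Y*(A^(j+1)*A^(j+1))*A^(j+1)) := by
          rw [mul_assoc, pow_mul_pow A (show (2*j+1)+(j+2) = 3*j+3 by omega),
            ← pow_mul_pow A (show (j+1)+(2*j+2) = 3*j+3 by omega),
            ← pow_mul_pow A (show (j+1)+(j+1) = 2*j+2 by omega)]
          simp only [mul_assoc]
      _ = Y*(A^(j+1)*A^(j+1)) := by rw [hYB2]; exact hYB2
      _ = A^(j+1) := hYB2
  · exact (((Commute.refl A).pow_right (2*j+1)).mul_right
      (hcAY.mul_right hcAY)).eq
  · calc (A^(2*j+1)*(Y*Y))^(j+1) * A^(j+1)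
        = A^((2*j+1)*(j+1)) * Y^(2*j+2) * A^(j+1) := by
          rw [hc.mul_pow, ← pow_mul, ← pow_two, ← pow_mul,
            show 2*(j+1) = 2*j+2 by omega]
      _ = Y^(2*j+2) * (A^((2*j+1)*(j+1)) * A^(j+1)) := by
          rw [(hcAY.pow_pow ((2*j+1)*(j+1)) (2*j+2)).eq, mul_assoc]
      _ = Y^(2*j+2) * A^((j+1)*(2*j+2)) := by
          rw [pow_mul_pow A (show (2*j+1)*(j+1)+(j+1) = (j+1)*(2*j+2) by ring)]
      _ = Y * A^(j+1) := by
          have h := claim (2*j+1)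
          rwa [show 2*j+1+1 = 2*j+2 by omega] at h

/-- Monoid-level core of (3) ⟹ (2). -/
lemma m32 {M : Type*} [Monoid M] (A X : M) (j : ℕ)
    (H1 : X * A^(j+2) = A^(j+1)) (Hc : A*X = X*A) :
    (X^(j+2)*A^(j+1)) * A^(j+2) = A^(j+1) ∧
    A*((X^(j+2)*A^(j+1))*(X^(j+2)*A^(j+1))) = X^(j+2)*A^(j+1) ∧
    (X^(j+2)*A^(j+1))^(j+1) * A^(j+1) = X^(j+1) * A^(j+1) := by
  have f2 := f2_lemma A X j H1
  have hcAX : Commute A X := Hc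
  have hc : Commute (X^(j+2)) (A^(j+1)) := hcAX.symm.pow_pow (j+2) (j+1)
  have sw : ∀ (u v : M), Commute u v → ∀ z, u*(v*z) = v*(u*z) := by
    intro u v h z
    rw [← mul_assoc, h.eq, mul_assoc]
  have claimC : ∀ n, X^((j+1)*(n+1)) * A^((j+1)*(n+1)) = X^(j+1)*A^(j+1) := by
    intro n
    induction n with
    | zero => simp
    | succ n ih =>
      calc X^((j+1)*(n+2)) * A^((j+1)*(n+2))
          = X^(j+1)*X^((j+1)*(n+1))*(A^((j+1)*(n+1))*A^(j+1)) := by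
            rw [← pow_mul_pow X (show (j+1)+(j+1)*(n+1) = (j+1)*(n+2) by ring),
              ← pow_mul_pow A (show (j+1)*(n+1)+(j+1) = (j+1)*(n+2) by ring)]
        _ = X^(j+1)*(X^((j+1)*(n+1))*A^((j+1)*(n+1)))*A^(j+1) := by
            simp only [mul_assoc]
        _ = X^(j+1)*(X^(j+1)*A^(j+1))*A^(j+1) := by rw [ih]
        _ = X^(j+1)*(X^(j+1)*(A^(j+1)*A^(j+1))) := by simp only [mul_assoc]
        _ = X^(j+1)*(X^(j+1)*A^(j+j+2)) := by
            rw [pow_mul_pow A (show (j+1)+(j+1) = j+j+2 by omega)]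
        _ = X^(j+1)*A^(j+1) := by rw [f2 j]
  refine ⟨?_, ?_, ?_⟩
  · rw [mul_assoc, pow_mul_pow A (show (j+1)+(j+2) = j+(j+1)+2 by omega)]
    exact f2 (j+1)
  · calc A*((X^(j+2)*A^(j+1))*(X^(j+2)*A^(j+1)))
        = A*(X^(j+2)*(A^(j+1)*(X^(j+2)*A^(j+1)))) := by simp only [mul_assoc]
      _ = A*(X^(j+2)*(X^(j+2)*(A^(j+1)*A^(j+1)))) := by
          rw [sw _ _ (hcAX.pow_pow (j+1) (j+2))]
      _ = X^(j+2)*(X^(j+2)*(A*(A^(j+1)*A^(j+1)))) := by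
          rw [sw A (X^(j+2)) (hcAX.pow_right (j+2)),
            sw A (X^(j+2)) (hcAX.pow_right (j+2))]
      _ = X^(j+2)*(X^(j+2)*A^(j+(j+1)+2)) := by
          rw [pow_mul_pow A (show (j+1)+(j+1) = 2*j+2 by omega), ← pow_succ',
            show 2*j+2+1 = j+(j+1)+2 by omega]
      _ = X^(j+2)*A^(j+1) := by rw [f2 (j+1)]
  · calc (X^(j+2)*A^(j+1))^(j+1) * A^(j+1)
        = X^((j+2)*(j+1)) * A^((j+1)*(j+1)) * A^(j+1) := by
          rw [hc.mul_pow, ← pow_mul, ← pow_mul]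
      _ = X^((j+1)*(j+2)) * A^((j+1)*(j+2)) := by
          rw [mul_assoc, pow_mul_pow A (show (j+1)*(j+1)+(j+1) = (j+1)*(j+2) by ring),
            show (j+2)*(j+1) = (j+1)*(j+2) by ring]
      _ = X^(j+1)*A^(j+1) := by
          have h := claimC (j+1)
          rwa [show j+1+1 = j+2 by omega] at h

private lemma spow_coe {S : Type*} [Semigroup S] (a : S) :
    ∀ n, ((spow a (n+1) : S) : WithOne S) = (a : WithOne S)^(n+1)
  | 0 => by simp [spow]
  | (n+1) => by
    rw [show spow a (n+2) = spow a (n+1) * a from rfl, WithOne.coe_mul, spow_coe a n]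
    exact (pow_succ _ _).symm

section Wrappers

variable [Semigroup S] [StarMul S]

private lemma lem21 (a : S) (k : ℕ) (hk : 0 < k)
    (h : ∃ x, x * spow a (k + 1) = spow a k ∧ a * (x * x) = x ∧
        star (spow x k * spow a k) = spow x k * spow a k) :
    IsEP (spow a k) := by
  obtain ⟨j, rfl⟩ : ∃ j, k = j + 1 := ⟨k - 1, by omega⟩
  obtain ⟨x, hx1, hx2, hx3⟩ := h
  have H1 : (x : WithOne S) * (a : WithOne S)^(j+2) = (a : WithOne S)^(j+1) := by
    have := congrArg (fun s : S => (s : WithOne S)) hx1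
    simpa only [WithOne.coe_mul, spow_coe] using this
  have H2 : (a : WithOne S) * ((x : WithOne S) * (x : WithOne S)) = (x : WithOne S) := by
    have := congrArg (fun s : S => (s : WithOne S)) hx2
    simpa only [WithOne.coe_mul] using this
  obtain ⟨G1, G2, G3, G4⟩ := m21 (a : WithOne S) (x : WithOne S) j H1 H2
  have e3 : spow a (j+1) * spow (spow x (j+2) * spow a (j+1)) (j+1)
      = spow x (j+1) * spow a (j+1) := by
    apply WithOne.coe_inj.mp
    simp only [WithOne.coe_mul, spow_coe]
    exact G3
  have e4 : spow (spow x (j+2) * spow a (j+1)) (j+1) * spow a (j+1)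
      = spow x (j+1) * spow a (j+1) := by
    apply WithOne.coe_inj.mp
    simp only [WithOne.coe_mul, spow_coe]
    exact G4
  have g1 : spow a (j+1) * spow (spow x (j+2) * spow a (j+1)) (j+1) * spow a (j+1)
      = spow a (j+1) := by
    apply WithOne.coe_inj.mp
    simp only [WithOne.coe_mul, spow_coe]
    exact G1
  have g2 : spow (spow x (j+2) * spow a (j+1)) (j+1) * spow a (j+1) *
      spow (spow x (j+2) * spow a (j+1)) (j+1)
      = spow (spow x (j+2) * spow a (j+1)) (j+1) := by
    apply WithOne.coe_inj.mp
    simp only [WithOne.coe_mul, spow_coe]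
    exact G2
  exact ⟨spow (spow x (j+2) * spow a (j+1)) (j+1),
    ⟨g1, g2, e3.trans e4.symm⟩,
    ⟨g1, g2, by rw [e3]; exact hx3, by rw [e4]; exact hx3⟩⟩

private lemma lem13 (a : S) (k : ℕ) (hk : 0 < k) (h : IsEP (spow a k)) :
    ∃ x, x * spow a (k + 1) = spow a k ∧ a * x = x * a ∧
        star (spow x k * spow a k) = spow x k * spow a k := by
  obtain ⟨j, rfl⟩ : ∃ j, k = j + 1 := ⟨k - 1, by omega⟩
  obtain ⟨y, ⟨g1, g2, g3⟩, mp⟩ := h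
  have H1 : (a : WithOne S)^(j+1) * (y : WithOne S) * (a : WithOne S)^(j+1)
      = (a : WithOne S)^(j+1) := by
    have := congrArg (fun s : S => (s : WithOne S)) g1
    simpa only [WithOne.coe_mul, spow_coe] using this
  have H2 : (y : WithOne S) * (a : WithOne S)^(j+1) * (y : WithOne S) = (y : WithOne S) := by
    have := congrArg (fun s : S => (s : WithOne S)) g2
    simpa only [WithOne.coe_mul, spow_coe] using this
  have H3 : (a : WithOne S)^(j+1) * (y : WithOne S)
      = (y : WithOne S) * (a : WithOne S)^(j+1) := by
    have := congrArg (fun s : S => (s : WithOne S)) g3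
    simpa only [WithOne.coe_mul, spow_coe] using this
  obtain ⟨C1, C2, C3⟩ := m13 (a : WithOne S) (y : WithOne S) j H1 H2 H3
  refine ⟨spow a (2*j+1) * (y*y), ?_, ?_, ?_⟩
  · apply WithOne.coe_inj.mp
    simp only [WithOne.coe_mul, spow_coe]
    exact C1
  · apply WithOne.coe_inj.mp
    simp only [WithOne.coe_mul, spow_coe]
    exact C2
  · have e : spow (spow a (2*j+1) * (y*y)) (j+1) * spow a (j+1) = y * spow a (j+1) := by
      apply WithOne.coe_inj.mp
      simp only [WithOne.coe_mul, spow_coe]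
      exact C3
    rw [e]
    exact mp.2.2.2

private lemma lem32 (a : S) (k : ℕ) (hk : 0 < k)
    (h : ∃ x, x * spow a (k + 1) = spow a k ∧ a * x = x * a ∧
        star (spow x k * spow a k) = spow x k * spow a k) :
    ∃ x, x * spow a (k + 1) = spow a k ∧ a * (x * x) = x ∧
        star (spow x k * spow a k) = spow x k * spow a k := by
  obtain ⟨j, rfl⟩ : ∃ j, k = j + 1 := ⟨k - 1, by omega⟩
  obtain ⟨x, hx1, hx2, hx3⟩ := h
  have H1 : (x : WithOne S) * (a : WithOne S)^(j+2) = (a : WithOne S)^(j+1) := by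
    have := congrArg (fun s : S => (s : WithOne S)) hx1
    simpa only [WithOne.coe_mul, spow_coe] using this
  have Hc : (a : WithOne S) * (x : WithOne S) = (x : WithOne S) * (a : WithOne S) := by
    have := congrArg (fun s : S => (s : WithOne S)) hx2
    simpa only [WithOne.coe_mul] using this
  obtain ⟨D1, D2, D3⟩ := m32 (a : WithOne S) (x : WithOne S) j H1 Hc
  refine ⟨spow x (j+2) * spow a (j+1), ?_, ?_, ?_⟩
  · apply WithOne.coe_inj.mp
    simp only [WithOne.coe_mul, spow_coe]
    exact D1
  · apply WithOne.coe_inj.mp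
    simp only [WithOne.coe_mul, spow_coe]
    exact D2
  · have e : spow (spow x (j+2) * spow a (j+1)) (j+1) * spow a (j+1)
        = spow x (j+1) * spow a (j+1) := by
      apply WithOne.coe_inj.mp
      simp only [WithOne.coe_mul, spow_coe]
      exact D3
    rw [e]
    exact hx3

end Wrappers

/-- Theorem 2.11: equational characterizations of *-DMP elements. -/
theorem stmt_7 [Semigroup S] [StarMul S] (a : S) (m : ℕ) :
    List.TFAE
      [ IsStarDMPWithIndex a m,
        0 < m ∧
          (∃ x, x * spow a (m + 1) = spow a m ∧ a * (x * x) = x ∧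
            star (spow x m * spow a m) = spow x m * spow a m) ∧
          ∀ k, 0 < k →
            (∃ x, x * spow a (k + 1) = spow a k ∧ a * (x * x) = x ∧
              star (spow x k * spow a k) = spow x k * spow a k) → m ≤ k,
        0 < m ∧
          (∃ x, x * spow a (m + 1) = spow a m ∧ a * x = x * a ∧
            star (spow x m * spow a m) = spow x m * spow a m) ∧
          ∀ k, 0 < k →
            (∃ x, x * spow a (k + 1) = spow a k ∧ a * x = x * a ∧
              star (spow x k * spow a k) = spow x k * spow a k) → m ≤ k ] := by
  tfae_have 1 → 3
  | ⟨hm, hEP, hmin⟩ =>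
    ⟨hm, lem13 a m hm hEP, fun k hk h3 => hmin k hk (lem21 a k hk (lem32 a k hk h3))⟩
  tfae_have 3 → 2
  | ⟨hm, h3, hmin⟩ =>
    ⟨hm, lem32 a m hm h3, fun k hk h2 => hmin k hk (lem13 a k hk (lem21 a k hk h2))⟩
  tfae_have 2 → 1
  | ⟨hm, h2, hmin⟩ =>
    ⟨hm, lem21 a m hm h2, fun k hk hEP => hmin k hk (lem32 a k hk (lem13 a k hk hEP))⟩
  tfae_finish
end
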